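/- arXiv:1901.11483 — 9 statements merged into one kernel-verified Lean document; each statement's English description precedes it below -/
import Mathlib

section
/- Let P₀ and D be m×m stochastic matrices with D having identical rows, and P_ε = (1-ε)P₀ + εD for ε ∈ (0,1]. Then for every N ≥ 1, Q(P_ε^N) ≥ (1-ε)^N Q(P₀^N) + 1 - (1-ε)^N, where Q(A) = min_{i,j} ∑_k min(a_{ik}, a_{jk}). -/
open Finset Matrix

/-- The ergodicity functional `Q(A) = min_{i,j} ∑_k min (a_{ik}) (a_{jk})`. -/
noncomputable def ergQ {m : ℕ} (A : Matrix (Fin m) (Fin m) ℝ) : ℝ :=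
  ⨅ p : Fin m × Fin m, ∑ k, min (A p.1 k) (A p.2 k)

/-- for stochastic `P₀` and damping matrix `D` with identical rows,
and `P_ε = (1-ε) P₀ + ε D` with `ε ∈ (0,1]`, for every `N ≥ 1`,
`Q(P_ε^N) ≥ (1-ε)^N Q(P₀^N) + 1 - (1-ε)^N`. -/
theorem stmt7 {m : ℕ} (hm : 0 < m) (P₀ D : Matrix (Fin m) (Fin m) ℝ)
    (hP₀nonneg : ∀ i j, 0 ≤ P₀ i j) (hP₀row : ∀ i, ∑ j, P₀ i j = 1)
    (hDnonneg : ∀ i j, 0 ≤ D i j) (hDrow : ∀ i, ∑ j, D i j = 1)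
    (hDrowsEq : ∀ i i' j, D i j = D i' j)
    (ε : ℝ) (hε : ε ∈ Set.Ioc (0 : ℝ) 1)
    (N : ℕ) (hN : 1 ≤ N) :
    (1 - ε) ^ N * ergQ (P₀ ^ N) + 1 - (1 - ε) ^ N
      ≤ ergQ (((1 - ε) • P₀ + ε • D) ^ N) := by
  obtain ⟨hε0, hε1⟩ := hε
  have : Nonempty (Fin m) := ⟨⟨0, hm⟩⟩
  set i0 : Fin m := ⟨0, hm⟩ with hi0
  set t : ℝ := 1 - ε with ht
  have ht0 : 0 ≤ t := by simp [ht]; linarith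
  set Pe : Matrix (Fin m) (Fin m) ℝ := (1 - ε) • P₀ + ε • D with hPe
  have hPe_apply : ∀ i j, Pe i j = t * P₀ i j + ε * D i j := by
    intro i j
    simp [hPe, Matrix.add_apply, Matrix.smul_apply, smul_eq_mul, ht]
  have hPe_nonneg : ∀ i j, 0 ≤ Pe i j := by
    intro i j
    rw [hPe_apply]
    have := hP₀nonneg i j
    have := hDnonneg i j
    positivity
  have hPe_row : ∀ i, ∑ j, Pe i j = 1 := by
    intro i
    simp only [hPe_apply]
    rw [Finset.sum_add_distrib, ← Finset.mul_sum, ← Finset.mul_sum, hP₀row, hDrow]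
    ring
  -- powers of P₀ are stochastic
  have hpow : ∀ n : ℕ, (∀ i j, 0 ≤ (P₀ ^ n) i j) ∧ (∀ i, ∑ j, (P₀ ^ n) i j = 1) := by
    intro n
    induction n with
    | zero =>
      constructor
      · intro i j; simp [Matrix.one_apply]; split <;> norm_num
      · intro i; simp [Matrix.one_apply]
    | succ n ih =>
      obtain ⟨ih1, ih2⟩ := ih
      constructor
      · intro i j
        rw [pow_succ, Matrix.mul_apply]
        exact Finset.sum_nonneg fun k _ => mul_nonneg (ih1 i k) (hP₀nonneg k j)
      · intro i
        simp only [pow_succ, Matrix.mul_apply]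
        rw [Finset.sum_comm]
        calc ∑ k, ∑ j, (P₀ ^ n) i k * P₀ k j
            = ∑ k, (P₀ ^ n) i k * ∑ j, P₀ k j := by
              simp [Finset.mul_sum]
          _ = 1 := by simp only [hP₀row]; simpa using ih2 i
  -- key decomposition
  have key : ∀ n : ℕ, ∃ c : Fin m → ℝ, (∀ j, 0 ≤ c j) ∧ (∑ j, c j = 1 - t ^ n) ∧
      (∀ i j, (Pe ^ n) i j = t ^ n * (P₀ ^ n) i j + c j) := by
    intro n
    induction n with
    | zero =>
      exact ⟨fun _ => 0, fun j => le_refl 0, by simp, fun i j => by simp⟩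
    | succ n ih =>
      obtain ⟨c, hc0, hcsum, hEq⟩ := ih
      refine ⟨fun j => t ^ n * ε * D i0 j + ∑ k, c k * Pe k j, ?_, ?_, ?_⟩
      · intro j
        have h1 : 0 ≤ t ^ n * ε * D i0 j :=
          mul_nonneg (mul_nonneg (pow_nonneg ht0 n) hε0.le) (hDnonneg i0 j)
        have h2 : 0 ≤ ∑ k, c k * Pe k j :=
          Finset.sum_nonneg fun k _ => mul_nonneg (hc0 k) (hPe_nonneg k j)
        dsimp only
        linarith
      · rw [Finset.sum_add_distrib]
        have h1 : ∑ j, t ^ n * ε * D i0 j = t ^ n * ε := by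
          rw [← Finset.mul_sum, hDrow]; ring
        have h2 : ∑ j, ∑ k, c k * Pe k j = 1 - t ^ n := by
          rw [Finset.sum_comm]
          calc ∑ k, ∑ j, c k * Pe k j = ∑ k, c k * ∑ j, Pe k j := by
                simp [Finset.mul_sum]
            _ = ∑ k, c k := by simp [hPe_row]
            _ = 1 - t ^ n := hcsum
        rw [h1, h2, pow_succ]
        ring
      · intro i j
        rw [pow_succ, Matrix.mul_apply]
        have step : ∀ k, (Pe ^ n) i k * Pe k j
            = t ^ (n+1) * ((P₀ ^ n) i k * P₀ k j)
              + t ^ n * ε * ((P₀ ^ n) i k * D i0 j) + c k * Pe k j := by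
          intro k
          rw [hEq i k, hPe_apply k j, hDrowsEq k i0 j, pow_succ]
          ring
        simp only [step]
        rw [Finset.sum_add_distrib, Finset.sum_add_distrib, ← Finset.mul_sum,
          ← Finset.mul_sum, ← Finset.sum_mul, (hpow n).2 i]
        have hP : (P₀ ^ (n+1)) i j = ∑ k, (P₀ ^ n) i k * P₀ k j := by
          rw [pow_succ, Matrix.mul_apply]
        rw [hP, Finset.mul_sum]
        ring
  obtain ⟨c, hc0, hcsum, hEq⟩ := key N
  have htN : (0:ℝ) ≤ t ^ N := pow_nonneg ht0 N
  -- lower bound for ergQ of Pe^N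
  conv_rhs => rw [ergQ]
  apply le_ciInf
  intro p
  have hsum : ∑ k, min ((Pe ^ N) p.1 k) ((Pe ^ N) p.2 k)
      = t ^ N * (∑ k, min ((P₀ ^ N) p.1 k) ((P₀ ^ N) p.2 k)) + (1 - t ^ N) := by
    rw [Finset.mul_sum, ← hcsum, ← Finset.sum_add_distrib]
    apply Finset.sum_congr rfl
    intro k _
    rw [hEq p.1 k, hEq p.2 k, min_add_add_right, ← mul_min_of_nonneg _ _ htN]
  rw [hsum]
  have hQle : ergQ (P₀ ^ N) ≤ ∑ k, min ((P₀ ^ N) p.1 k) ((P₀ ^ N) p.2 k) := by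
    apply ciInf_le (Finite.bddBelow_range _) p
  have := mul_le_mul_of_nonneg_left hQle htN
  linarith
end

section
/- Let P₀ be an m×m stochastic matrix, d a positive probability vector, and for ε ∈ (0,1] let P_ε = (1-ε)P₀ + εD with D the matrix with all rows equal to d. Then for any initial distribution p̄ and any state j, the n-step probabilities satisfy the renewal-type identity: p_{ε,p̄,j}(n) = p_{0,p̄,j}(n)(1-ε)^n + ∑_{l=1}^n p_{ε,d̄,j}(n-l) ε(1-ε)^{l-1} for all n ≥ 0, where p_{ε,q̄,j}(n) denotes the probability that the chain with transition matrix P_ε and initial distribution q̄ is in state j at time n. -/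
open Finset Matrix

/-- renewal-type identity for the `n`-step probabilities of the Markov chain
with damping component: with `P_ε = (1-ε) P₀ + ε D`, `D` having all rows equal to the positive
probability vector `d`, for any initial distribution `p̄`, state `j` and `n ≥ 0`,
`p_{ε,p̄,j}(n) = p_{0,p̄,j}(n) (1-ε)^n + ∑_{l=1}^n p_{ε,d̄,j}(n-l) ε (1-ε)^{l-1}`. -/
theorem stmt10 {m : ℕ} (P₀ D : Matrix (Fin m) (Fin m) ℝ) (d : Fin m → ℝ)
    (hP₀nonneg : ∀ i j, 0 ≤ P₀ i j) (hP₀row : ∀ i, ∑ j, P₀ i j = 1)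
    (hd : ∀ j, 0 < d j) (hdsum : ∑ j, d j = 1)
    (hD : ∀ i j, D i j = d j)
    (ε : ℝ) (hε : ε ∈ Set.Ioc (0 : ℝ) 1)
    (p : Fin m → ℝ) (hpnonneg : ∀ i, 0 ≤ p i) (hpsum : ∑ i, p i = 1)
    (j : Fin m) (n : ℕ) :
    (∑ i, p i * (((1 - ε) • P₀ + ε • D) ^ n) i j)
      = (∑ i, p i * (P₀ ^ n) i j) * (1 - ε) ^ n
        + ∑ l ∈ Finset.Icc 1 n,
            (∑ i, d i * (((1 - ε) • P₀ + ε • D) ^ (n - l)) i j) * (ε * (1 - ε) ^ (l - 1)) := by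
  set Q : Matrix (Fin m) (Fin m) ℝ := (1 - ε) • P₀ + ε • D with hQ
  suffices h : ∀ (n : ℕ) (p : Fin m → ℝ), (∑ i, p i = 1) →
      (∑ i, p i * (Q ^ n) i j)
        = (∑ i, p i * (P₀ ^ n) i j) * (1 - ε) ^ n
          + ∑ l ∈ Finset.Icc 1 n,
              (∑ i, d i * (Q ^ (n - l)) i j) * (ε * (1 - ε) ^ (l - 1)) by
    exact h n p hpsum
  intro n
  induction n with
  | zero => intro p hp; simp
  | succ n ih =>
    intro p hp
    -- the pushed-forward distribution after one P₀-step
    set q : Fin m → ℝ := fun k => ∑ i, p i * P₀ i k with hq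
    have hqsum : ∑ k, q k = 1 := by
      rw [hq]
      rw [Finset.sum_comm]
      simp only [← Finset.mul_sum, hP₀row, mul_one, hp]
    -- one-step decomposition
    have key : (∑ i, p i * (Q ^ (n + 1)) i j)
        = (1 - ε) * (∑ k, q k * (Q ^ n) k j) + ε * (∑ k, d k * (Q ^ n) k j) := by
      rw [pow_succ']
      calc ∑ i, p i * (Q * Q ^ n) i j
          = ∑ i, ∑ k, p i * (Q i k * (Q ^ n) k j) := by
            simp [Matrix.mul_apply, Finset.mul_sum]
        _ = ∑ k, (∑ i, p i * Q i k) * (Q ^ n) k j := by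
            rw [Finset.sum_comm]
            simp [Finset.sum_mul, mul_assoc]
        _ = ∑ k, ((1 - ε) * q k + ε * d k) * (Q ^ n) k j := by
            refine Finset.sum_congr rfl fun k _ => ?_
            congr 1
            have : ∀ i, p i * Q i k = (1 - ε) * (p i * P₀ i k) + ε * d k * p i := by
              intro i
              simp [hQ, hD, Matrix.add_apply, Matrix.smul_apply]
              ring
            simp only [this, Finset.sum_add_distrib, ← Finset.mul_sum, hp, hq]
            ring
        _ = (1 - ε) * (∑ k, q k * (Q ^ n) k j) + ε * (∑ k, d k * (Q ^ n) k j) := by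
            simp only [add_mul, Finset.sum_add_distrib, ← Finset.mul_sum, mul_assoc]
    have hq0 : (∑ k, q k * (P₀ ^ n) k j) = ∑ i, p i * (P₀ ^ (n + 1)) i j := by
      rw [pow_succ']
      simp only [Matrix.mul_apply, Finset.mul_sum, hq, Finset.sum_mul]
      rw [Finset.sum_comm]
      simp [mul_assoc]
    rw [key, ih q hqsum, hq0]
    -- now handle the Icc sums via range sums
    have hconv : ∀ (k : ℕ),
        (∑ l ∈ Finset.Icc 1 k, (∑ i, d i * (Q ^ (k - l)) i j) * (ε * (1 - ε) ^ (l - 1)))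
          = ∑ l ∈ Finset.range k, (∑ i, d i * (Q ^ (k - 1 - l)) i j) * (ε * (1 - ε) ^ l) := by
      intro k
      refine Finset.sum_nbij' (fun l => l - 1) (fun l => l + 1)
        (fun a ha => ?_) (fun a ha => ?_) (fun a ha => ?_) (fun a ha => ?_) (fun a ha => ?_) <;>
        simp only [Finset.mem_Icc, Finset.mem_range] at ha ⊢
      all_goals try omega
      rw [show k - 1 - (a - 1) = k - a from by omega]
    rw [hconv (n + 1), hconv n, Finset.sum_range_succ']
    have h1 : ∀ l : ℕ, n + 1 - 1 - (l + 1) = n - 1 - l := by omega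
    have h2 : n + 1 - 1 - 0 = n := by omega
    simp only [h1, h2, pow_zero, mul_one, pow_succ]
    rw [mul_add, Finset.mul_sum]
    have h3 : ∀ l ∈ Finset.range n,
        (1 - ε) * ((∑ i, d i * (Q ^ (n - 1 - l)) i j) * (ε * (1 - ε) ^ l))
          = (∑ i, d i * (Q ^ (n - 1 - l)) i j) * (ε * ((1 - ε) ^ l * (1 - ε))) :=
      fun l _ => by ring
    rw [Finset.sum_congr rfl h3]
    ring
end

section
/- Let P₀ be an m×m stochastic matrix, d a positive probability vector, D the stochastic matrix with all rows equal to d, and P_ε = (1-ε)P₀ + εD for ε ∈ (0,1]. Then for every initial distribution p̄ and state j, p_{ε,p̄,j}(n) → π_{ε,j} as n → ∞, where π_{ε,j} = ε ∑_{l=0}^∞ p_{0,d̄,j}(l)(1-ε)^l, and moreover (π_{ε,j}) is the unique stationary distribution of P_ε. -/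
open Finset Matrix Filter

private lemma stochPow {m : ℕ} (A : Matrix (Fin m) (Fin m) ℝ)
    (h1 : ∀ i j, 0 ≤ A i j) (h2 : ∀ i, ∑ j, A i j = 1) :
    ∀ n : ℕ, (∀ i j, 0 ≤ (A ^ n) i j) ∧ (∀ i, ∑ j, (A ^ n) i j = 1) := by
  intro n
  induction n with
  | zero =>
    refine ⟨fun i j => ?_, fun i => ?_⟩
    · simp only [pow_zero, Matrix.one_apply]
      split <;> norm_num
    · simp [Matrix.one_apply]
  | succ n ih =>
    refine ⟨fun i j => ?_, fun i => ?_⟩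
    · rw [pow_succ, Matrix.mul_apply]
      exact Finset.sum_nonneg fun k _ => mul_nonneg (ih.1 i k) (h1 k j)
    · simp only [pow_succ, Matrix.mul_apply]
      rw [Finset.sum_comm]
      simp_rw [← Finset.mul_sum, h2, mul_one]
      exact ih.2 i

private lemma sumMulPow {m : ℕ} (v : Fin m → ℝ) (B : Matrix (Fin m) (Fin m) ℝ) (n : ℕ)
    (j : Fin m) :
    ∑ i, v i * (B ^ (n + 1)) i j = ∑ k, (∑ i, v i * (B ^ n) i k) * B k j := by
  rw [pow_succ]
  simp only [Matrix.mul_apply, Finset.mul_sum, Finset.sum_mul, mul_assoc]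
  exact Finset.sum_comm

private lemma keyFormula {m : ℕ} (P₀ D : Matrix (Fin m) (Fin m) ℝ) (d : Fin m → ℝ)
    (hP₀nonneg : ∀ i j, 0 ≤ P₀ i j) (hP₀row : ∀ i, ∑ j, P₀ i j = 1)
    (hd : ∀ j, 0 ≤ d j) (hdsum : ∑ j, d j = 1)
    (hD : ∀ i j, D i j = d j)
    (ε : ℝ) (hε0 : 0 < ε) (hε1 : ε ≤ 1)
    (p : Fin m → ℝ) (hp1 : ∑ i, p i = 1) :
    ∀ (n : ℕ) (j : Fin m),
      ∑ i, p i * (((1 - ε) • P₀ + ε • D) ^ n) i j =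
        (1 - ε) ^ n * (∑ i, p i * (P₀ ^ n) i j)
          + ε * ∑ l ∈ Finset.range n, (∑ i, d i * (P₀ ^ l) i j) * (1 - ε) ^ l := by
  set Pε := (1 - ε) • P₀ + ε • D with hPεdef
  have hPεapply : ∀ i j, Pε i j = (1 - ε) * P₀ i j + ε * d j := by
    intro i j
    simp [hPεdef, Matrix.add_apply, Matrix.smul_apply, hD, smul_eq_mul]
  have hPεnn : ∀ i j, 0 ≤ Pε i j := by
    intro i j; rw [hPεapply]
    have h1 := hP₀nonneg i j; have h2 := hd j
    nlinarith
  have hPεrow : ∀ i, ∑ j, Pε i j = 1 := by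
    intro i
    simp_rw [hPεapply]
    rw [Finset.sum_add_distrib, ← Finset.mul_sum, ← Finset.mul_sum, hP₀row, hdsum]
    ring
  intro n
  induction n with
  | zero => intro j; simp
  | succ n ih =>
    intro j
    have hq1 : ∑ k, (∑ i, p i * (Pε ^ n) i k) = 1 := by
      rw [Finset.sum_comm]
      simp_rw [← Finset.mul_sum, (stochPow Pε hPεnn hPεrow n).2, mul_one]
      exact hp1
    rw [sumMulPow]
    have e1 : ∑ k, (∑ i, p i * (Pε ^ n) i k) * Pε k j
        = (1 - ε) * (∑ k, (∑ i, p i * (Pε ^ n) i k) * P₀ k j) + ε * d j := by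
      simp_rw [hPεapply, mul_add]
      rw [Finset.sum_add_distrib]
      congr 1
      · rw [Finset.mul_sum]
        exact Finset.sum_congr rfl fun k _ => by ring
      · simp_rw [show ∀ k : Fin m, (∑ i, p i * (Pε ^ n) i k) * (ε * d j)
            = (ε * d j) * (∑ i, p i * (Pε ^ n) i k) from fun k => by ring]
        rw [← Finset.mul_sum, hq1, mul_one]
    have e2 : ∑ k, (∑ i, p i * (Pε ^ n) i k) * P₀ k j
        = (1 - ε) ^ n * (∑ i, p i * (P₀ ^ (n + 1)) i j)
          + ε * ∑ l ∈ Finset.range n, (∑ i, d i * (P₀ ^ (l + 1)) i j) * (1 - ε) ^ l := by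
      calc ∑ k, (∑ i, p i * (Pε ^ n) i k) * P₀ k j
          = ∑ k, ((1 - ε) ^ n * (∑ i, p i * (P₀ ^ n) i k)
              + ε * ∑ l ∈ Finset.range n, (∑ i, d i * (P₀ ^ l) i k) * (1 - ε) ^ l)
              * P₀ k j := Finset.sum_congr rfl fun k _ => by rw [ih k]
        _ = (1 - ε) ^ n * (∑ k, (∑ i, p i * (P₀ ^ n) i k) * P₀ k j)
            + ε * ∑ k, (∑ l ∈ Finset.range n, (∑ i, d i * (P₀ ^ l) i k) * (1 - ε) ^ l)
              * P₀ k j := by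
            rw [Finset.mul_sum, Finset.mul_sum, ← Finset.sum_add_distrib]
            exact Finset.sum_congr rfl fun k _ => by ring
        _ = (1 - ε) ^ n * (∑ i, p i * (P₀ ^ (n + 1)) i j)
            + ε * ∑ l ∈ Finset.range n, (∑ i, d i * (P₀ ^ (l + 1)) i j) * (1 - ε) ^ l := by
            rw [← sumMulPow p P₀ n j]
            congr 1
            congr 1
            simp_rw [Finset.sum_mul]
            rw [Finset.sum_comm]
            refine Finset.sum_congr rfl fun l _ => ?_
            conv_rhs => rw [← Finset.sum_mul, sumMulPow d P₀ l j, Finset.sum_mul]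
            refine Finset.sum_congr rfl fun k _ => ?_
            conv_rhs => rw [Finset.sum_mul, Finset.sum_mul]
            exact Finset.sum_congr rfl fun i _ => by ring
    have e3 : ∑ l ∈ Finset.range (n + 1), (∑ i, d i * (P₀ ^ l) i j) * (1 - ε) ^ l
        = (1 - ε) * (∑ l ∈ Finset.range n, (∑ i, d i * (P₀ ^ (l + 1)) i j) * (1 - ε) ^ l)
          + d j := by
      rw [Finset.sum_range_succ']
      congr 1
      · rw [Finset.mul_sum]
        exact Finset.sum_congr rfl fun l _ => by ring
      · simp [Matrix.one_apply, mul_comm]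
    rw [e1, e2, e3]
    ring

/-- ergodic theorem for the Markov chain with damping component.
With `P_ε = (1-ε) P₀ + ε D`, `D` having all rows equal to the positive probability vector `d`
and `ε ∈ (0,1]`: for every initial distribution `p̄` and state `j`,
`p_{ε,p̄,j}(n) → π_{ε,j} = ε ∑_{l=0}^∞ p_{0,d̄,j}(l) (1-ε)^l` as `n → ∞`,
and `π_ε` is the unique stationary distribution of `P_ε`. -/
theorem stmt11 {m : ℕ} (P₀ D : Matrix (Fin m) (Fin m) ℝ) (d : Fin m → ℝ)
    (hP₀nonneg : ∀ i j, 0 ≤ P₀ i j) (hP₀row : ∀ i, ∑ j, P₀ i j = 1)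
    (hd : ∀ j, 0 < d j) (hdsum : ∑ j, d j = 1)
    (hD : ∀ i j, D i j = d j)
    (ε : ℝ) (hε : ε ∈ Set.Ioc (0 : ℝ) 1)
    (πe : Fin m → ℝ)
    (hπe : ∀ j, πe j = ε * ∑' l : ℕ, (∑ i, d i * (P₀ ^ l) i j) * (1 - ε) ^ l) :
    (∀ (p : Fin m → ℝ), (∀ i, 0 ≤ p i) → (∑ i, p i = 1) → ∀ j : Fin m,
      Tendsto (fun n : ℕ => ∑ i, p i * (((1 - ε) • P₀ + ε • D) ^ n) i j)
        atTop (nhds (πe j))) ∧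
    (∀ j, 0 ≤ πe j) ∧ (∑ j, πe j = 1) ∧
    (∀ j, ∑ i, πe i * ((1 - ε) • P₀ + ε • D) i j = πe j) ∧
    (∀ σ : Fin m → ℝ, (∀ i, 0 ≤ σ i) → (∑ i, σ i = 1) →
      (∀ j, ∑ i, σ i * ((1 - ε) • P₀ + ε • D) i j = σ j) → σ = πe) := by
  obtain ⟨hε0, hε1⟩ := hε
  have hr0 : 0 ≤ 1 - ε := by linarith
  have hr1 : 1 - ε < 1 := by linarith
  have hd' : ∀ j, 0 ≤ d j := fun j => (hd j).le
  set Pε := (1 - ε) • P₀ + ε • D with hPεdef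
  have hPεapply : ∀ i j, Pε i j = (1 - ε) * P₀ i j + ε * d j := by
    intro i j
    simp [hPεdef, Matrix.add_apply, Matrix.smul_apply, hD, smul_eq_mul]
  have hPεnn : ∀ i j, 0 ≤ Pε i j := by
    intro i j; rw [hPεapply]
    have h1 := hP₀nonneg i j; have h2 := hd' j
    nlinarith
  have hPεrow : ∀ i, ∑ j, Pε i j = 1 := by
    intro i
    simp_rw [hPεapply]
    rw [Finset.sum_add_distrib, ← Finset.mul_sum, ← Finset.mul_sum, hP₀row, hdsum]
    ring
  -- convergence
  have hconv : ∀ (p : Fin m → ℝ), (∀ i, 0 ≤ p i) → (∑ i, p i = 1) → ∀ j : Fin m,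
      Tendsto (fun n : ℕ => ∑ i, p i * (Pε ^ n) i j) atTop (nhds (πe j)) := by
    intro p hp0 hp1 j
    have ha0 : ∀ l : ℕ, 0 ≤ ∑ i, d i * (P₀ ^ l) i j := fun l =>
      Finset.sum_nonneg fun i _ =>
        mul_nonneg (hd' i) ((stochPow P₀ hP₀nonneg hP₀row l).1 i j)
    have hentry : ∀ (l : ℕ) (i k : Fin m), (P₀ ^ l) i k ≤ 1 := by
      intro l i k
      have h1 := (stochPow P₀ hP₀nonneg hP₀row l).1
      have h2 := (stochPow P₀ hP₀nonneg hP₀row l).2 i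
      calc (P₀ ^ l) i k ≤ ∑ k', (P₀ ^ l) i k' :=
            Finset.single_le_sum (fun k' _ => h1 i k') (Finset.mem_univ k)
        _ = 1 := h2
    have ha1 : ∀ l : ℕ, (∑ i, d i * (P₀ ^ l) i j) ≤ 1 := by
      intro l
      calc ∑ i, d i * (P₀ ^ l) i j ≤ ∑ i, d i * 1 :=
            Finset.sum_le_sum fun i _ =>
              mul_le_mul_of_nonneg_left (hentry l i j) (hd' i)
        _ = 1 := by simp [hdsum]
    have hsummable : Summable (fun l : ℕ => (∑ i, d i * (P₀ ^ l) i j) * (1 - ε) ^ l) := by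
      refine Summable.of_nonneg_of_le
        (fun l => mul_nonneg (ha0 l) (pow_nonneg hr0 l)) (fun l => ?_)
        (summable_geometric_of_lt_one hr0 hr1)
      calc (∑ i, d i * (P₀ ^ l) i j) * (1 - ε) ^ l ≤ 1 * (1 - ε) ^ l :=
            mul_le_mul_of_nonneg_right (ha1 l) (pow_nonneg hr0 l)
        _ = (1 - ε) ^ l := one_mul _
    have hT2 : Tendsto
        (fun n : ℕ => ε * ∑ l ∈ Finset.range n, (∑ i, d i * (P₀ ^ l) i j) * (1 - ε) ^ l)
        atTop (nhds (ε * ∑' l : ℕ, (∑ i, d i * (P₀ ^ l) i j) * (1 - ε) ^ l)) :=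
      hsummable.hasSum.tendsto_sum_nat.const_mul ε
    have hs_ge : ∀ n : ℕ, 0 ≤ ∑ i, p i * (P₀ ^ n) i j := fun n =>
      Finset.sum_nonneg fun i _ =>
        mul_nonneg (hp0 i) ((stochPow P₀ hP₀nonneg hP₀row n).1 i j)
    have hs_le : ∀ n : ℕ, ∑ i, p i * (P₀ ^ n) i j ≤ 1 := by
      intro n
      calc ∑ i, p i * (P₀ ^ n) i j ≤ ∑ i, p i * 1 :=
            Finset.sum_le_sum fun i _ =>
              mul_le_mul_of_nonneg_left (hentry n i j) (hp0 i)
        _ = 1 := by simp [hp1]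
    have hT1 : Tendsto (fun n : ℕ => (1 - ε) ^ n * (∑ i, p i * (P₀ ^ n) i j))
        atTop (nhds 0) := by
      refine squeeze_zero (fun n => mul_nonneg (pow_nonneg hr0 n) (hs_ge n)) (fun n => ?_)
        (tendsto_pow_atTop_nhds_zero_of_lt_one hr0 hr1)
      calc (1 - ε) ^ n * (∑ i, p i * (P₀ ^ n) i j) ≤ (1 - ε) ^ n * 1 :=
            mul_le_mul_of_nonneg_left (hs_le n) (pow_nonneg hr0 n)
        _ = (1 - ε) ^ n := mul_one _
    have hsum := hT1.add hT2
    rw [zero_add] at hsum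
    rw [hπe j]
    refine hsum.congr fun n => ?_
    exact (keyFormula P₀ D d hP₀nonneg hP₀row hd' hdsum hD ε hε0 hε1 p hp1 n j).symm
  have hdconv := hconv d hd' hdsum
  -- nonnegativity
  have hnn : ∀ j, 0 ≤ πe j := by
    intro j
    refine ge_of_tendsto' (hdconv j) fun n => ?_
    exact Finset.sum_nonneg fun i _ =>
      mul_nonneg (hd' i) ((stochPow Pε hPεnn hPεrow n).1 i j)
  -- sum one
  have hsum1 : ∑ j, πe j = 1 := by
    have h1 : Tendsto (fun n : ℕ => ∑ j, ∑ i, d i * (Pε ^ n) i j) atTop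
        (nhds (∑ j, πe j)) := tendsto_finset_sum _ fun j _ => hdconv j
    have h2 : ∀ n : ℕ, ∑ j, ∑ i, d i * (Pε ^ n) i j = 1 := by
      intro n
      rw [Finset.sum_comm]
      simp_rw [← Finset.mul_sum, (stochPow Pε hPεnn hPεrow n).2, mul_one]
      exact hdsum
    have h3 : Tendsto (fun n : ℕ => ∑ j, ∑ i, d i * (Pε ^ n) i j) atTop (nhds 1) := by
      simp_rw [h2]; exact tendsto_const_nhds
    exact tendsto_nhds_unique h1 h3
  -- stationarity
  have hstat : ∀ j, ∑ i, πe i * Pε i j = πe j := by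
    intro j
    have h1 : Tendsto (fun n : ℕ => ∑ i, (∑ i', d i' * (Pε ^ n) i' i) * Pε i j) atTop
        (nhds (∑ i, πe i * Pε i j)) :=
      tendsto_finset_sum _ fun i _ => (hdconv i).mul_const _
    have h2 : Tendsto (fun n : ℕ => ∑ i, (∑ i', d i' * (Pε ^ n) i' i) * Pε i j) atTop
        (nhds (πe j)) := by
      have h3 : Tendsto (fun n : ℕ => ∑ i', d i' * (Pε ^ (n + 1)) i' j) atTop
          (nhds (πe j)) := (hdconv j).comp (tendsto_add_atTop_nat 1)
      refine h3.congr fun n => ?_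
      exact sumMulPow d Pε n j
    exact tendsto_nhds_unique h1 h2
  refine ⟨hconv, hnn, hsum1, hstat, ?_⟩
  -- uniqueness
  intro σ hσ0 hσ1 hσst
  have hfix : ∀ (n : ℕ) (j : Fin m), ∑ i, σ i * (Pε ^ n) i j = σ j := by
    intro n
    induction n with
    | zero => intro j; simp [Matrix.one_apply]
    | succ n ih =>
      intro j
      rw [sumMulPow]
      simp_rw [ih]
      exact hσst j
  funext j
  have h1 := hconv σ hσ0 hσ1 j
  have h2 : Tendsto (fun n : ℕ => ∑ i, σ i * (Pε ^ n) i j) atTop (nhds (σ j)) := by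
    simp_rw [hfix]; exact tendsto_const_nhds
  exact tendsto_nhds_unique h2 h1
end

section
/- Suppose there exist C ∈ [0,∞), λ ∈ [0,1), and a probability vector π₀ = (π_{0,j}) such that max_{i,j} |(P₀^n)_{ij} - π_{0,j}| ≤ C λ^n for all n ≥ 1. Let π_ε be the stationary distribution of P_ε = (1-ε)P₀ + εD with D having identical rows d. Then for every j, |π_{ε,j} - π_{0,j}| ≤ ε(|d_j - π_{0,j}| + Cλ/(1-λ)). -/
open Finset Matrix

/-- if `max_{i,j} |(P₀^n)_{ij} - π_{0,j}| ≤ C λ^n` for all `n ≥ 1` with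
`C ∈ [0,∞)`, `λ ∈ [0,1)` and a probability vector `π₀`, then the stationary distribution
`π_ε` of `P_ε = (1-ε) P₀ + ε D` (with `D` having identical rows `d`) satisfies
`|π_{ε,j} - π_{0,j}| ≤ ε (|d_j - π_{0,j}| + C λ / (1-λ))` for every `j`. -/
theorem stmt13 {m : ℕ} (P₀ D : Matrix (Fin m) (Fin m) ℝ) (d : Fin m → ℝ)
    (hP₀nonneg : ∀ i j, 0 ≤ P₀ i j) (hP₀row : ∀ i, ∑ j, P₀ i j = 1)
    (hdnonneg : ∀ j, 0 ≤ d j) (hdsum : ∑ j, d j = 1)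
    (hD : ∀ i j, D i j = d j)
    (C lam : ℝ) (hC : 0 ≤ C) (hlam : lam ∈ Set.Ico (0 : ℝ) 1)
    (π₀ : Fin m → ℝ) (hπ₀nonneg : ∀ j, 0 ≤ π₀ j) (hπ₀sum : ∑ j, π₀ j = 1)
    (hbound : ∀ n : ℕ, 1 ≤ n → ∀ i j, |(P₀ ^ n) i j - π₀ j| ≤ C * lam ^ n)
    (ε : ℝ) (hε : ε ∈ Set.Ioc (0 : ℝ) 1)
    (πe : Fin m → ℝ) (hπenonneg : ∀ j, 0 ≤ πe j) (hπesum : ∑ j, πe j = 1)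
    (hπestat : ∀ j, ∑ i, πe i * ((1 - ε) • P₀ + ε • D) i j = πe j)
    (j : Fin m) :
    |πe j - π₀ j| ≤ ε * (|d j - π₀ j| + C * lam / (1 - lam)) := by
  obtain ⟨hε0, hε1⟩ := hε
  obtain ⟨hlam0, hlam1⟩ := hlam
  set r : ℝ := 1 - ε with hrdef
  have hr0 : 0 ≤ r := by simp [hrdef]; linarith
  have hr1 : r < 1 := by simp [hrdef]; linarith
  set v : ℕ → ℝ := fun l => ∑ i, d i * (P₀ ^ l) i j with hvdef
  set w : ℕ → ℝ := fun n => ∑ i, πe i * (P₀ ^ n) i j with hwdef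
  -- stationarity rewritten
  have hstat : ∀ k, r * (∑ i, πe i * P₀ i k) + ε * d k = πe k := by
    intro k
    have hsum : ∑ i, πe i * D i k = d k := by
      simp only [hD]
      rw [← Finset.sum_mul, hπesum, one_mul]
    calc r * (∑ i, πe i * P₀ i k) + ε * d k
        = ∑ i, (r * (πe i * P₀ i k) + ε * (πe i * D i k)) := by
          rw [Finset.sum_add_distrib, ← Finset.mul_sum, ← Finset.mul_sum, hsum]
      _ = ∑ i, πe i * ((1 - ε) • P₀ + ε • D) i k := by
          refine Finset.sum_congr rfl fun i _ => ?_
          simp only [Matrix.add_apply, Matrix.smul_apply, smul_eq_mul, hrdef]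
          ring
      _ = πe k := hπestat k
  -- recursion for w
  have hrec : ∀ n, w n = r * w (n + 1) + ε * v n := by
    intro n
    have hpow : ∀ i : Fin m, (P₀ ^ (n + 1)) i j = ∑ k, P₀ i k * (P₀ ^ n) k j := by
      intro i
      rw [pow_succ']
      simp [Matrix.mul_apply]
    calc w n = ∑ k, (r * (∑ i, πe i * P₀ i k) + ε * d k) * (P₀ ^ n) k j := by
          exact Finset.sum_congr rfl fun k _ => by rw [hstat k]
      _ = r * (∑ k, (∑ i, πe i * P₀ i k) * (P₀ ^ n) k j)
            + ε * ∑ k, d k * (P₀ ^ n) k j := by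
          rw [Finset.mul_sum, Finset.mul_sum, ← Finset.sum_add_distrib]
          exact Finset.sum_congr rfl fun k _ => by ring
      _ = r * w (n + 1) + ε * v n := by
          congr 1
          congr 1
          simp only [hwdef, hpow, Finset.sum_mul, Finset.mul_sum]
          rw [Finset.sum_comm]
          exact Finset.sum_congr rfl fun i _ => Finset.sum_congr rfl fun k _ => by ring
  -- iterated identity
  have hw0 : w 0 = πe j := by
    simp [hwdef, Matrix.one_apply]
  have hiter : ∀ n, πe j = ε * ∑ l ∈ Finset.range n, r ^ l * v l + r ^ n * w n := by
    intro n
    induction n with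
    | zero => simp [hw0]
    | succ n ih =>
      rw [Finset.sum_range_succ, ih, hrec n]
      ring
  -- geometric identity
  have hgeom : ∀ n : ℕ, ε * ∑ l ∈ Finset.range n, r ^ l = 1 - r ^ n := by
    intro n
    have h := geom_sum_mul r n
    have hεr : ε = 1 - r := by simp [hrdef]
    rw [hεr]
    linear_combination -h
  -- difference identity
  have hdiff : ∀ n, πe j - π₀ j
      = ε * ∑ l ∈ Finset.range n, r ^ l * (v l - π₀ j) + r ^ n * (w n - π₀ j) := by
    intro n
    have expand : ∑ l ∈ Finset.range n, r ^ l * (v l - π₀ j)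
        = (∑ l ∈ Finset.range n, r ^ l * v l)
          - (∑ l ∈ Finset.range n, r ^ l) * π₀ j := by
      rw [Finset.sum_mul, ← Finset.sum_sub_distrib]
      exact Finset.sum_congr rfl fun l _ => by ring
    rw [expand]
    linear_combination hiter n + π₀ j * hgeom n
  -- bounds
  have hvbound : ∀ l : ℕ, 1 ≤ l → |v l - π₀ j| ≤ C * lam ^ l := by
    intro l hl
    have hv' : v l - π₀ j = ∑ i, d i * ((P₀ ^ l) i j - π₀ j) := by
      simp only [hvdef, mul_sub]
      rw [Finset.sum_sub_distrib, ← Finset.sum_mul, hdsum, one_mul]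
    rw [hv']
    calc |∑ i, d i * ((P₀ ^ l) i j - π₀ j)|
        ≤ ∑ i, |d i * ((P₀ ^ l) i j - π₀ j)| := Finset.abs_sum_le_sum_abs _ _
      _ ≤ ∑ i : Fin m, d i * (C * lam ^ l) := by
          refine Finset.sum_le_sum fun i _ => ?_
          rw [abs_mul, abs_of_nonneg (hdnonneg i)]
          exact mul_le_mul_of_nonneg_left (hbound l hl i j) (hdnonneg i)
      _ = C * lam ^ l := by rw [← Finset.sum_mul, hdsum, one_mul]
  have hwbound : ∀ n : ℕ, 1 ≤ n → |w n - π₀ j| ≤ C := by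
    intro n hn
    have hw' : w n - π₀ j = ∑ i, πe i * ((P₀ ^ n) i j - π₀ j) := by
      simp only [hwdef, mul_sub]
      rw [Finset.sum_sub_distrib, ← Finset.sum_mul, hπesum, one_mul]
    rw [hw']
    calc |∑ i, πe i * ((P₀ ^ n) i j - π₀ j)|
        ≤ ∑ i, |πe i * ((P₀ ^ n) i j - π₀ j)| := Finset.abs_sum_le_sum_abs _ _
      _ ≤ ∑ i : Fin m, πe i * C := by
          refine Finset.sum_le_sum fun i _ => ?_
          rw [abs_mul, abs_of_nonneg (hπenonneg i)]
          refine mul_le_mul_of_nonneg_left ((hbound n hn i j).trans ?_) (hπenonneg i)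
          calc C * lam ^ n ≤ C * 1 := by
                refine mul_le_mul_of_nonneg_left ?_ hC
                exact pow_le_one₀ hlam0 hlam1.le
            _ = C := mul_one C
      _ = C := by rw [← Finset.sum_mul, hπesum, one_mul]
  have hv0 : v 0 = d j := by
    simp [hvdef, Matrix.one_apply]
  -- geometric sum bound for lam
  have hgl : ∀ k : ℕ, ∑ i ∈ Finset.range k, lam ^ i ≤ 1 / (1 - lam) := by
    intro k
    have h := geom_sum_mul lam k
    have hlp : (0:ℝ) ≤ lam ^ k := pow_nonneg hlam0 k
    have h1 : (0:ℝ) < 1 - lam := by linarith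
    rw [le_div_iff₀ h1]
    nlinarith
  -- main estimate for n ≥ 1
  set B : ℝ := ε * (|d j - π₀ j| + C * lam / (1 - lam)) with hBdef
  have key : ∀ n : ℕ, 1 ≤ n → |πe j - π₀ j| ≤ B + C * r ^ n := by
    intro n hn
    obtain ⟨k, rfl⟩ : ∃ k, n = k + 1 := ⟨n - 1, (Nat.succ_pred_eq_of_pos hn).symm⟩
    have hsplit : ∑ l ∈ Finset.range (k + 1), r ^ l * (v l - π₀ j)
        = (∑ i ∈ Finset.range k, r ^ (i + 1) * (v (i + 1) - π₀ j)) + (v 0 - π₀ j) := by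
      rw [Finset.sum_range_succ']
      simp
    have hsum_bound : |∑ l ∈ Finset.range (k + 1), r ^ l * (v l - π₀ j)|
        ≤ |d j - π₀ j| + C * lam / (1 - lam) := by
      rw [hsplit]
      have h1 : |∑ i ∈ Finset.range k, r ^ (i + 1) * (v (i + 1) - π₀ j)|
          ≤ C * lam / (1 - lam) := by
        calc |∑ i ∈ Finset.range k, r ^ (i + 1) * (v (i + 1) - π₀ j)|
            ≤ ∑ i ∈ Finset.range k, |r ^ (i + 1) * (v (i + 1) - π₀ j)| :=
              Finset.abs_sum_le_sum_abs _ _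
          _ ≤ ∑ i ∈ Finset.range k, C * lam ^ (i + 1) := by
              refine Finset.sum_le_sum fun i _ => ?_
              rw [abs_mul, abs_of_nonneg (pow_nonneg hr0 _)]
              have hb := hvbound (i + 1) (Nat.le_add_left 1 i)
              have hle1 : r ^ (i + 1) ≤ 1 := pow_le_one₀ hr0 hr1.le
              have habs : (0:ℝ) ≤ |v (i + 1) - π₀ j| := abs_nonneg _
              calc r ^ (i + 1) * |v (i + 1) - π₀ j| ≤ 1 * |v (i + 1) - π₀ j| :=
                    mul_le_mul_of_nonneg_right hle1 habs
                _ = |v (i + 1) - π₀ j| := one_mul _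
                _ ≤ C * lam ^ (i + 1) := hb
          _ = C * lam * ∑ i ∈ Finset.range k, lam ^ i := by
              rw [Finset.mul_sum]
              exact Finset.sum_congr rfl fun i _ => by ring
          _ ≤ C * lam * (1 / (1 - lam)) := by
              refine mul_le_mul_of_nonneg_left (hgl k) ?_
              positivity
          _ = C * lam / (1 - lam) := by ring
      calc |(∑ i ∈ Finset.range k, r ^ (i + 1) * (v (i + 1) - π₀ j)) + (v 0 - π₀ j)|
          ≤ |∑ i ∈ Finset.range k, r ^ (i + 1) * (v (i + 1) - π₀ j)| + |v 0 - π₀ j| :=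
            abs_add_le _ _
        _ ≤ C * lam / (1 - lam) + |d j - π₀ j| := by
            rw [hv0]; exact add_le_add h1 le_rfl
        _ = |d j - π₀ j| + C * lam / (1 - lam) := by ring
    rw [hdiff (k + 1)]
    calc |ε * ∑ l ∈ Finset.range (k + 1), r ^ l * (v l - π₀ j)
            + r ^ (k + 1) * (w (k + 1) - π₀ j)|
        ≤ |ε * ∑ l ∈ Finset.range (k + 1), r ^ l * (v l - π₀ j)|
            + |r ^ (k + 1) * (w (k + 1) - π₀ j)| := abs_add_le _ _
      _ ≤ ε * (|d j - π₀ j| + C * lam / (1 - lam)) + r ^ (k + 1) * C := by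
          refine add_le_add ?_ ?_
          · rw [abs_mul, abs_of_pos hε0]
            exact mul_le_mul_of_nonneg_left hsum_bound hε0.le
          · rw [abs_mul, abs_of_nonneg (pow_nonneg hr0 _)]
            exact mul_le_mul_of_nonneg_left (hwbound (k + 1) (Nat.le_add_left 1 k))
              (pow_nonneg hr0 _)
      _ = B + C * r ^ (k + 1) := by rw [hBdef]; ring
  -- take the limit
  have htend : Filter.Tendsto (fun n : ℕ => B + C * r ^ n) Filter.atTop (nhds B) := by
    have h0 : Filter.Tendsto (fun n : ℕ => r ^ n) Filter.atTop (nhds 0) :=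
      tendsto_pow_atTop_nhds_zero_of_lt_one hr0 hr1
    have := (h0.const_mul C).const_add B
    simpa using this
  refine ge_of_tendsto htend ?_
  exact Filter.eventually_atTop.2 ⟨1, fun n hn => key n hn⟩
end

section
/- Assume the exponential ergodicity bound max_{i,j}|(P₀^n)_{ij} - π_{0,j}| ≤ Cλ^n (n ≥ 1) with λ ∈ [0,1), and the geometric-resolvent bound |π_{ε,j} - π_{0,j}| ≤ ε(|d_j - π_{0,j}| + Cλ/(1-λ)). Then for any sequence ε ↦ n_ε with n_ε → ∞ as ε → 0+, and any initial distribution p̄ and state k, one has p_{ε,p̄,k}(n_ε) → π_{0,k} as ε → 0+, where p_{ε,p̄,k}(n) = ∑_i p_i ((1-ε)P₀ + εD)^n_{ik}. -/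
/-!
Because `D` has identical rows and `P_ε = (1 - ε) P₀ + ε D` has row sums `1`, `P_ε D = D`:
a chain restarted from `d` forgets everything before its last restart, whence
`P_ε ^ N = (1 - ε) ^ N P₀ ^ N + ∑_{l < N} ε (1 - ε) ^ l D P₀ ^ l`.
The weights sum to `1`, so the deviation of `p̄ P_ε ^ N` from `π₀` is a weighted average of the
deviations of `p̄ P₀ ^ N` and of `d P₀ ^ l`. The exponential bound then gives
`|p_{ε,p̄,k}(N) - π_{0,k}| ≤ C λ ^ N + ε (|d_k - π_{0,k}| + C λ / (1 - λ))`,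
and both terms vanish when `ε → 0+` and `N = n_ε → ∞`.
-/

open Finset Matrix Filter Topology

theorem smul_add_smul_pow_eq {R S : Type*} [CommRing R] [Ring S] [Algebra R S]
    (A B : S) (a b : R) (hB : (a • A + b • B) * B = B) (N : ℕ) :
    (a • A + b • B) ^ N = a ^ N • A ^ N + ∑ l ∈ range N, (b * a ^ l) • (B * A ^ l) := by
  induction N with
  | zero => simp
  | succ N ih =>
    have hBA : ∀ l, (a • A + b • B) * (B * A ^ l) = B * A ^ l := fun l => by
      rw [← mul_assoc, hB]
    rw [pow_succ', ih, mul_add, mul_sum, sum_range_succ]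
    simp only [mul_smul_comm, hBA, add_mul, smul_mul_assoc, ← pow_succ', smul_add, smul_smul]
    ring_nf
    abel

namespace Matrix

variable {ι κ ν : Type*}

theorem mul_eq_of_sum_row_eq_one {R : Type*} [Semiring R] [Fintype κ] (A : Matrix ι κ R)
    (D : Matrix κ ν R) (d : ν → R) (hA : ∀ i, ∑ j, A i j = 1) (hD : ∀ i j, D i j = d j) :
    A * D = of fun _ => d := by
  ext i j
  simp [mul_apply, hD, ← sum_mul, hA i]

theorem vecMul_eq_of_mem_stdSimplex {R : Type*} [CommSemiring R] [PartialOrder R] [Fintype ι]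
    {p : ι → R} (hp : p ∈ stdSimplex R ι) (D : Matrix ι ν R) (d : ν → R)
    (hD : ∀ i j, D i j = d j) : p ᵥ* D = d := by
  ext j
  simp [vecMul, dotProduct, hD, ← sum_mul, hp.2]

theorem abs_vecMul_sub_le_of_mem_stdSimplex [Fintype ι] {p : ι → ℝ} (hp : p ∈ stdSimplex ℝ ι)
    (A : Matrix ι κ ℝ) (k : κ) (c r : ℝ) (h : ∀ i, |A i k - c| ≤ r) :
    |(p ᵥ* A) k - c| ≤ r := by
  have hdev : (p ᵥ* A) k - c = ∑ i, p i * (A i k - c) := by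
    simp [vecMul, dotProduct, mul_sub, ← sum_mul, hp.2]
  calc |(p ᵥ* A) k - c| ≤ ∑ i, |p i * (A i k - c)| := hdev ▸ abs_sum_le_sum_abs _ _
    _ ≤ ∑ i, p i * r := by
        gcongr with i
        rw [abs_mul, abs_of_nonneg (hp.1 i)]
        exact mul_le_mul_of_nonneg_left (h i) (hp.1 i)
    _ = r := by rw [← sum_mul, hp.2, one_mul]

end Matrix

theorem sum_abs_le_of_abs_le_geometric (x : ℕ → ℝ) {C lam : ℝ} (hC : 0 ≤ C)
    (hlam : lam ∈ Set.Ico (0 : ℝ) 1) (hx : ∀ l, 1 ≤ l → |x l| ≤ C * lam ^ l) (N : ℕ) :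
    ∑ l ∈ range N, |x l| ≤ |x 0| + C * lam / (1 - lam) := by
  have hlam' : 0 < 1 - lam := sub_pos.2 hlam.2
  rcases N.eq_zero_or_pos with rfl | hN
  · simp only [range_zero, sum_empty]
    have := hlam.1
    positivity
  rw [sum_range_eq_add_Ico _ hN, add_le_add_iff_left]
  calc ∑ l ∈ Ico 1 N, |x l| ≤ ∑ l ∈ Ico 1 N, C * lam ^ l :=
        sum_le_sum fun l hl => hx l (mem_Ico.1 hl).1
    _ = C * ∑ l ∈ Ico 1 N, lam ^ l := (mul_sum _ _ _).symm
    _ ≤ C * (lam ^ 1 / (1 - lam)) :=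
        mul_le_mul_of_nonneg_left (geom_sum_Ico_le_of_lt_one hlam.1 hlam.2) hC
    _ = C * lam / (1 - lam) := by ring

theorem abs_sum_mul_one_sub_pow_le {ε : ℝ} (hε : ε ∈ Set.Icc (0 : ℝ) 1) (x : ℕ → ℝ) (N : ℕ) :
    |∑ l ∈ range N, ε * (1 - ε) ^ l * x l| ≤ ε * ∑ l ∈ range N, |x l| := by
  have h1ε : 0 ≤ 1 - ε := sub_nonneg.2 hε.2
  rw [mul_sum]
  refine (abs_sum_le_sum_abs _ _).trans (sum_le_sum fun l _ => ?_)
  rw [abs_mul, abs_mul, abs_of_nonneg hε.1, abs_of_nonneg (pow_nonneg h1ε l), mul_assoc]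
  exact mul_le_mul_of_nonneg_left
    (mul_le_of_le_one_left (abs_nonneg _) (pow_le_one₀ h1ε (by linarith [hε.1]))) hε.1

theorem abs_vecMul_perturbed_pow_sub_le {m : ℕ} (P₀ D : Matrix (Fin m) (Fin m) ℝ)
    (d : Fin m → ℝ) (hP₀row : ∀ i, ∑ j, P₀ i j = 1) (hd : d ∈ stdSimplex ℝ (Fin m))
    (hD : ∀ i j, D i j = d j) {C lam : ℝ} (hC : 0 ≤ C) (hlam : lam ∈ Set.Ico (0 : ℝ) 1)
    (π₀ : Fin m → ℝ) (hbound : ∀ n : ℕ, 1 ≤ n → ∀ i j, |(P₀ ^ n) i j - π₀ j| ≤ C * lam ^ n)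
    {p : Fin m → ℝ} (hp : p ∈ stdSimplex ℝ (Fin m)) (k : Fin m)
    {ε : ℝ} (hε : ε ∈ Set.Icc (0 : ℝ) 1) {N : ℕ} (hN : 1 ≤ N) :
    |(p ᵥ* ((1 - ε) • P₀ + ε • D) ^ N) k - π₀ k|
      ≤ C * lam ^ N + ε * (|d k - π₀ k| + C * lam / (1 - lam)) := by
  have hrow : ∀ i, ∑ j, ((1 - ε) • P₀ + ε • D) i j = 1 := fun i => by
    simp [sum_add_distrib, ← mul_sum, hP₀row, hD, hd.2]
  have hPD : ((1 - ε) • P₀ + ε • D) * D = D := by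
    rw [mul_eq_of_sum_row_eq_one _ D d hrow hD]
    ext i j
    exact (hD i j).symm
  have hweights : ∑ l ∈ range N, ε * (1 - ε) ^ l = 1 - (1 - ε) ^ N := by
    rw [← mul_sum, mul_comm, ← geom_sum_mul_neg, sub_sub_cancel]
  have hdev : (p ᵥ* ((1 - ε) • P₀ + ε • D) ^ N) k - π₀ k
      = (1 - ε) ^ N * ((p ᵥ* P₀ ^ N) k - π₀ k)
        + ∑ l ∈ range N, ε * (1 - ε) ^ l * ((d ᵥ* P₀ ^ l) k - π₀ k) := by
    rw [smul_add_smul_pow_eq _ _ _ _ hPD, vecMul_add, vecMul_smul, vecMul_sum]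
    simp only [vecMul_smul, ← vecMul_vecMul, vecMul_eq_of_mem_stdSimplex hp D d hD,
      Pi.add_apply, Pi.smul_apply, Finset.sum_apply, smul_eq_mul, mul_sub, sum_sub_distrib,
      ← sum_mul, hweights]
    ring
  have hstart : |(p ᵥ* P₀ ^ N) k - π₀ k| ≤ C * lam ^ N :=
    abs_vecMul_sub_le_of_mem_stdSimplex hp _ k _ _ fun i => hbound N hN i k
  have hrestart : ∀ l, 1 ≤ l → |(d ᵥ* P₀ ^ l) k - π₀ k| ≤ C * lam ^ l := fun l hl =>
    abs_vecMul_sub_le_of_mem_stdSimplex hd _ k _ _ fun i => hbound l hl i k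
  have h1ε : 0 ≤ 1 - ε := sub_nonneg.2 hε.2
  rw [hdev]
  refine (abs_add_le _ _).trans (add_le_add ?_ ?_)
  · rw [abs_mul, abs_of_nonneg (pow_nonneg h1ε N)]
    exact (mul_le_of_le_one_left (abs_nonneg _) (pow_le_one₀ h1ε (by linarith [hε.1]))).trans
      hstart
  · refine (abs_sum_mul_one_sub_pow_le hε _ N).trans (mul_le_mul_of_nonneg_left ?_ hε.1)
    simpa using sum_abs_le_of_abs_le_geometric _ hC hlam hrestart N

theorem stmt14_general {m : ℕ} (P₀ D : Matrix (Fin m) (Fin m) ℝ) (d : Fin m → ℝ)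
    (hP₀row : ∀ i, ∑ j, P₀ i j = 1)
    (hdnonneg : ∀ j, 0 ≤ d j) (hdsum : ∑ j, d j = 1)
    (hD : ∀ i j, D i j = d j)
    (C lam : ℝ) (hC : 0 ≤ C) (hlam : lam ∈ Set.Ico (0 : ℝ) 1)
    (π₀ : Fin m → ℝ)
    (hbound : ∀ n : ℕ, 1 ≤ n → ∀ i j, |(P₀ ^ n) i j - π₀ j| ≤ C * lam ^ n)
    (n : ℝ → ℕ) (hn : Tendsto n (nhdsWithin 0 (Set.Ioi 0)) atTop)
    (p : Fin m → ℝ) (hpnonneg : ∀ i, 0 ≤ p i) (hpsum : ∑ i, p i = 1)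
    (k : Fin m) :
    Tendsto (fun ε : ℝ => ∑ i, p i * (((1 - ε) • P₀ + ε • D) ^ (n ε)) i k)
      (nhdsWithin 0 (Set.Ioi 0)) (nhds (π₀ k)) := by
  set K := |d k - π₀ k| + C * lam / (1 - lam)
  have hestimate : ∀ᶠ ε in 𝓝[>] 0,
      |∑ i, p i * (((1 - ε) • P₀ + ε • D) ^ (n ε)) i k - π₀ k| ≤ C * lam ^ n ε + ε * K := by
    filter_upwards [Ioc_mem_nhdsGT one_pos, hn.eventually_ge_atTop 1] with ε hε hN
    exact abs_vecMul_perturbed_pow_sub_le P₀ D d hP₀row ⟨hdnonneg, hdsum⟩ hD hC hlam π₀ hbound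
      ⟨hpnonneg, hpsum⟩ k (Set.Ioc_subset_Icc_self hε) hN
  have hbound_lim : Tendsto (fun ε => C * lam ^ n ε + ε * K) (𝓝[>] 0) (𝓝 0) := by
    have hpow := (tendsto_pow_atTop_nhds_zero_of_lt_one hlam.1 hlam.2).comp hn
    simpa using (hpow.const_mul C).add (tendsto_nhdsWithin_of_tendsto_nhds
      (tendsto_id.mul_const K))
  rw [tendsto_iff_norm_sub_tendsto_zero]
  exact squeeze_zero' (.of_forall fun _ => norm_nonneg _) hestimate hbound_lim

/-- triangular-array ergodic theorem in the regular case. Assume the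
exponential ergodicity bound `max_{i,j} |(P₀^n)_{ij} - π_{0,j}| ≤ C λ^n` (`n ≥ 1`, `λ ∈ [0,1)`)
and, for the stationary distributions `π_ε` of `P_ε = (1-ε) P₀ + ε D` (`ε ∈ (0,1]`), the bound
`|π_{ε,j} - π_{0,j}| ≤ ε (|d_j - π_{0,j}| + Cλ/(1-λ))`. Then for any `ε ↦ n_ε` with
`n_ε → ∞` as `ε → 0+`, any initial distribution `p̄` and any state `k`,
`p_{ε,p̄,k}(n_ε) → π_{0,k}` as `ε → 0+`. -/
theorem stmt14 {m : ℕ} (P₀ D : Matrix (Fin m) (Fin m) ℝ) (d : Fin m → ℝ)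
    (hP₀nonneg : ∀ i j, 0 ≤ P₀ i j) (hP₀row : ∀ i, ∑ j, P₀ i j = 1)
    (hdnonneg : ∀ j, 0 ≤ d j) (hdsum : ∑ j, d j = 1)
    (hD : ∀ i j, D i j = d j)
    (C lam : ℝ) (hC : 0 ≤ C) (hlam : lam ∈ Set.Ico (0 : ℝ) 1)
    (π₀ : Fin m → ℝ) (hπ₀nonneg : ∀ j, 0 ≤ π₀ j) (hπ₀sum : ∑ j, π₀ j = 1)
    (hbound : ∀ n : ℕ, 1 ≤ n → ∀ i j, |(P₀ ^ n) i j - π₀ j| ≤ C * lam ^ n)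
    (πe : ℝ → Fin m → ℝ)
    (hπe : ∀ ε ∈ Set.Ioc (0 : ℝ) 1,
      (∀ j, 0 ≤ πe ε j) ∧ (∑ j, πe ε j = 1) ∧
      (∀ j, ∑ i, πe ε i * ((1 - ε) • P₀ + ε • D) i j = πe ε j))
    (hπebound : ∀ ε ∈ Set.Ioc (0 : ℝ) 1, ∀ j,
      |πe ε j - π₀ j| ≤ ε * (|d j - π₀ j| + C * lam / (1 - lam)))
    (n : ℝ → ℕ) (hn : Tendsto n (nhdsWithin 0 (Set.Ioi 0)) atTop)
    (p : Fin m → ℝ) (hpnonneg : ∀ i, 0 ≤ p i) (hpsum : ∑ i, p i = 1)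
    (k : Fin m) :
    Tendsto (fun ε : ℝ => ∑ i, p i * (((1 - ε) • P₀ + ε • D) ^ (n ε)) i k)
      (nhdsWithin 0 (Set.Ioi 0)) (nhds (π₀ k)) :=
  stmt14_general P₀ D d hP₀row hdnonneg hdsum hD C lam hC hlam π₀ hbound n hn p hpnonneg hpsum k
end

section
/- Let P₀, D be m×m stochastic matrices with D having identical rows; let P_ε = (1-ε)P₀ + εD for ε ∈ (0,1], and let π_ε be its stationary distribution. Then for every initial distribution p̄, state j, and n ≥ 0, |p_{ε,p̄,j}(n) - π_{ε,j}| ≤ (1 - Q_{ε,p̄}) (1 - Q(P₀))^n (1 - ε)^n, where Q_{ε,p̄} = ∑_i min(p_i, π_{ε,i}) and Q(A) = min_{i,j} ∑_k min(a_{ik}, a_{jk}) (with the convention (1-Q(P₀))^0 = 1). -/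
open Finset Matrix

section
variable {ι κ : Type*} [Fintype ι]

theorem sum_abs_sub_eq_sub_two_mul_sum_min (x y : ι → ℝ) :
    ∑ i, |x i - y i| = ∑ i, x i + ∑ i, y i - 2 * ∑ i, min (x i) (y i) := by
  rw [← sum_add_distrib, mul_sum, ← sum_sub_distrib]
  refine sum_congr rfl fun i _ => ?_
  linarith [max_sub_min_eq_abs' (x i) (y i), min_add_max (x i) (y i)]

variable [Fintype κ]

theorem sum_abs_vecMul_le_of_sum_eq_zero {P : Matrix ι κ ℝ} {δ : ℝ}
    (hP : ∀ i i', ∑ k, |P i k - P i' k| ≤ 2 * δ) {μ : ι → ℝ} (hμ : ∑ i, μ i = 0) :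
    ∑ k, |(μ ᵥ* P) k| ≤ δ * ∑ i, |μ i| := by
  set S := ∑ i, (μ i)⁺
  -- `w / S` is a coupling of `μ⁺` and `μ⁻`, which both have mass `S`
  set w : ι × ι → ℝ := fun x => (μ x.1)⁺ * (μ x.2)⁻
  have hw : ∀ x, 0 ≤ w x := fun x => mul_nonneg (posPart_nonneg _) (negPart_nonneg _)
  have hneg : ∑ i, (μ i)⁻ = S := by
    rw [← sum_congr rfl fun i _ => posPart_sub_negPart (μ i), sum_sub_distrib] at hμ
    linarith
  have hnorm : ∑ i, |μ i| = 2 * S := by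
    rw [← sum_congr rfl fun i _ => posPart_add_negPart (μ i), sum_add_distrib, hneg]; ring
  have hwsum : ∑ x, w x = S * S := by
    simp only [w, Fintype.sum_prod_type]
    rw [← Fintype.sum_mul_sum, hneg]
  have htransport : ∀ k, S * (μ ᵥ* P) k = ∑ x, w x * (P x.1 k - P x.2 k) := by
    intro k
    have hsplit : (μ ᵥ* P) k = ∑ i, (μ i)⁺ * P i k - ∑ i, (μ i)⁻ * P i k := by
      simp only [vecMul, dotProduct, ← sum_sub_distrib, ← sub_mul, posPart_sub_negPart]
    simp only [w, Fintype.sum_prod_type, mul_sub, sum_sub_distrib]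
    have h1 : ∑ x, ∑ y, (μ x)⁺ * (μ y)⁻ * P x k = (∑ x, (μ x)⁺ * P x k) * ∑ y, (μ y)⁻ := by
      rw [Fintype.sum_mul_sum]; simp_rw [mul_right_comm]
    have h2 : ∑ x, ∑ y, (μ x)⁺ * (μ y)⁻ * P y k = S * ∑ y, (μ y)⁻ * P y k := by
      rw [Fintype.sum_mul_sum]; simp_rw [mul_assoc]
    rw [h1, h2, hneg, hsplit]; ring
  rcases (sum_nonneg fun i _ => posPart_nonneg (μ i) : 0 ≤ S).eq_or_lt with hS0 | hSpos
  · have hμ0 : μ = 0 := by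
      have := (sum_eq_zero_iff_of_nonneg fun i _ => abs_nonneg (μ i)).1 (by linarith)
      funext i; simpa using this i (mem_univ i)
    simp [hμ0]
  refine le_of_mul_le_mul_left ?_ hSpos
  calc S * ∑ k, |(μ ᵥ* P) k| = ∑ k, |∑ x, w x * (P x.1 k - P x.2 k)| := by
        rw [mul_sum]; refine sum_congr rfl fun k _ => ?_
        rw [← htransport, abs_mul, abs_of_pos hSpos]
    _ ≤ ∑ k, ∑ x, w x * |P x.1 k - P x.2 k| := by
        gcongr with k; refine (abs_sum_le_sum_abs _ _).trans_eq (sum_congr rfl fun x _ => ?_)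
        rw [abs_mul, abs_of_nonneg (hw x)]
    _ = ∑ x, w x * ∑ k, |P x.1 k - P x.2 k| := by
        rw [sum_comm]; simp_rw [mul_sum]
    _ ≤ ∑ x, w x * (2 * δ) := sum_le_sum fun x _ => mul_le_mul_of_nonneg_left (hP _ _) (hw x)
    _ = S * (δ * ∑ i, |μ i|) := by rw [← sum_mul, hwsum, hnorm]; ring

theorem sum_vecMul_of_sum_row_eq_one {P : Matrix ι κ ℝ} (hrow : ∀ i, ∑ k, P i k = 1)
    (v : ι → ℝ) : ∑ k, (v ᵥ* P) k = ∑ i, v i := by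
  simp only [vecMul, dotProduct]
  rw [sum_comm]
  simp [← mul_sum, hrow]

end

section
variable {ι : Type*} [Fintype ι] [DecidableEq ι]

theorem abs_le_half_sum_abs_of_sum_eq_zero {v : ι → ℝ} (hv : ∑ i, v i = 0) (j : ι) :
    |v j| ≤ (∑ i, |v i|) / 2 := by
  rw [← add_sum_erase _ _ (mem_univ j)] at hv ⊢
  have : |v j| ≤ ∑ i ∈ univ.erase j, |v i| := by
    rw [show v j = -∑ i ∈ univ.erase j, v i by linarith, abs_neg]
    exact abs_sum_le_sum_abs _ _
  linarith

theorem vecMul_pow_eq_self {R : Type*} [Semiring R] {P : Matrix ι ι R} {π : ι → R}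
    (h : π ᵥ* P = π) (n : ℕ) : π ᵥ* P ^ n = π := by
  induction n with
  | zero => exact vecMul_one π
  | succ n ih => rw [pow_succ, ← vecMul_vecMul, ih, h]

theorem sum_vecMul_pow_of_sum_row_eq_one {P : Matrix ι ι ℝ} (hrow : ∀ i, ∑ k, P i k = 1)
    (v : ι → ℝ) (n : ℕ) :
    ∑ k, (v ᵥ* P ^ n) k = ∑ i, v i := by
  induction n with
  | zero => rw [pow_zero, vecMul_one]
  | succ n ih => rw [pow_succ, ← vecMul_vecMul, sum_vecMul_of_sum_row_eq_one hrow, ih]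

theorem sum_abs_vecMul_pow_le_of_sum_eq_zero {P : Matrix ι ι ℝ} (hrow : ∀ i, ∑ k, P i k = 1)
    {δ : ℝ} (hδ : 0 ≤ δ) (hP : ∀ i i', ∑ k, |P i k - P i' k| ≤ 2 * δ)
    {μ : ι → ℝ} (hμ : ∑ i, μ i = 0) (n : ℕ) :
    ∑ k, |(μ ᵥ* P ^ n) k| ≤ δ ^ n * ∑ i, |μ i| := by
  induction n generalizing μ with
  | zero => simp
  | succ n ih =>
    rw [pow_succ', ← vecMul_vecMul]
    calc ∑ k, |((μ ᵥ* P) ᵥ* P ^ n) k| ≤ δ ^ n * ∑ k, |(μ ᵥ* P) k| :=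
          ih (by rwa [sum_vecMul_of_sum_row_eq_one hrow])
      _ ≤ δ ^ n * (δ * ∑ i, |μ i|) := by
          gcongr; exact sum_abs_vecMul_le_of_sum_eq_zero hP hμ
      _ = δ ^ (n + 1) * ∑ i, |μ i| := by ring

end

theorem sum_abs_sub_le_two_mul_one_sub_ergQ {m : ℕ} {P : Matrix (Fin m) (Fin m) ℝ}
    (hrow : ∀ i, ∑ k, P i k = 1) (i i' : Fin m) :
    ∑ k, |P i k - P i' k| ≤ 2 * (1 - ergQ P) := by
  have : ergQ P ≤ ∑ k, min (P i k) (P i' k) :=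
    ciInf_le (Set.finite_range _).bddBelow (i, i')
  rw [sum_abs_sub_eq_sub_two_mul_sum_min, hrow, hrow]; linarith

theorem sum_abs_sub_smul_add_smul_le {m : ℕ} {P₀ D : Matrix (Fin m) (Fin m) ℝ}
    (hrow : ∀ i, ∑ k, P₀ i k = 1) (hD : ∀ i i' k, D i k = D i' k) {ε : ℝ} (hε : ε ≤ 1)
    (i i' : Fin m) :
    ∑ k, |((1 - ε) • P₀ + ε • D) i k - ((1 - ε) • P₀ + ε • D) i' k|
      ≤ 2 * ((1 - ergQ P₀) * (1 - ε)) := by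
  simp only [Matrix.add_apply, Matrix.smul_apply, smul_eq_mul, hD i' i,
    add_sub_add_right_eq_sub, ← mul_sub, abs_mul, abs_of_nonneg (sub_nonneg.2 hε), ← mul_sum]
  nlinarith [sum_abs_sub_le_two_mul_one_sub_ergQ hrow i i']

theorem stmt16_general {m : ℕ} (P₀ D : Matrix (Fin m) (Fin m) ℝ)
    (hP₀row : ∀ i, ∑ j, P₀ i j = 1)
    (hDrow : ∀ i, ∑ j, D i j = 1)
    (hDrowsEq : ∀ i i' j, D i j = D i' j)
    (ε : ℝ) (hε : ε ∈ Set.Ioc (0 : ℝ) 1)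
    (πe : Fin m → ℝ) (hπesum : ∑ j, πe j = 1)
    (hπestat : ∀ j, ∑ i, πe i * ((1 - ε) • P₀ + ε • D) i j = πe j)
    (p : Fin m → ℝ) (hpsum : ∑ i, p i = 1)
    (j : Fin m) (n : ℕ) :
    |(∑ i, p i * (((1 - ε) • P₀ + ε • D) ^ n) i j) - πe j|
      ≤ (1 - ∑ i, min (p i) (πe i)) * (1 - ergQ P₀) ^ n * (1 - ε) ^ n := by
  set P := (1 - ε) • P₀ + ε • D
  have hrow : ∀ i, ∑ k, P i k = 1 := fun i => by
    simp only [P, Matrix.add_apply, Matrix.smul_apply, smul_eq_mul, sum_add_distrib, ← mul_sum,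
      hP₀row, hDrow]
    ring
  have hdiff := sum_abs_sub_smul_add_smul_le hP₀row hDrowsEq hε.2
  have hδ : 0 ≤ (1 - ergQ P₀) * (1 - ε) := by simpa using hdiff j j
  have hμ : ∑ i, (p - πe) i = 0 := by simp [sum_sub_distrib, hpsum, hπesum]
  calc |(∑ i, p i * (P ^ n) i j) - πe j| = |((p - πe) ᵥ* P ^ n) j| := by
        rw [sub_vecMul, vecMul_pow_eq_self (funext hπestat)]; rfl
    _ ≤ (∑ k, |((p - πe) ᵥ* P ^ n) k|) / 2 := abs_le_half_sum_abs_of_sum_eq_zero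
        (by rwa [sum_vecMul_pow_of_sum_row_eq_one hrow]) j
    _ ≤ (((1 - ergQ P₀) * (1 - ε)) ^ n * ∑ i, |(p - πe) i|) / 2 := by
        gcongr; exact sum_abs_vecMul_pow_le_of_sum_eq_zero hrow hδ hdiff hμ n
    _ = (1 - ∑ i, min (p i) (πe i)) * (1 - ergQ P₀) ^ n * (1 - ε) ^ n := by
        rw [Pi.sub_def, sum_abs_sub_eq_sub_two_mul_sum_min p πe, hpsum, hπesum, mul_pow]; ring

/-- one-step coupling bound. With `P_ε = (1-ε) P₀ + ε D` (`D` with identical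
rows), stationary distribution `π_ε`, for every initial distribution `p̄`, state `j`, `n ≥ 0`:
`|p_{ε,p̄,j}(n) - π_{ε,j}| ≤ (1 - Q_{ε,p̄}) (1 - Q(P₀))^n (1-ε)^n`, where
`Q_{ε,p̄} = ∑_i min (p_i) (π_{ε,i})` (with the convention `(1 - Q(P₀))^0 = 1`). -/
theorem stmt16 {m : ℕ} (hm : 0 < m) (P₀ D : Matrix (Fin m) (Fin m) ℝ)
    (hP₀nonneg : ∀ i j, 0 ≤ P₀ i j) (hP₀row : ∀ i, ∑ j, P₀ i j = 1)
    (hDnonneg : ∀ i j, 0 ≤ D i j) (hDrow : ∀ i, ∑ j, D i j = 1)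
    (hDrowsEq : ∀ i i' j, D i j = D i' j)
    (ε : ℝ) (hε : ε ∈ Set.Ioc (0 : ℝ) 1)
    (πe : Fin m → ℝ) (hπenonneg : ∀ j, 0 ≤ πe j) (hπesum : ∑ j, πe j = 1)
    (hπestat : ∀ j, ∑ i, πe i * ((1 - ε) • P₀ + ε • D) i j = πe j)
    (p : Fin m → ℝ) (hpnonneg : ∀ i, 0 ≤ p i) (hpsum : ∑ i, p i = 1)
    (j : Fin m) (n : ℕ) :
    |(∑ i, p i * (((1 - ε) • P₀ + ε • D) ^ n) i j) - πe j|
      ≤ (1 - ∑ i, min (p i) (πe i)) * (1 - ergQ P₀) ^ n * (1 - ε) ^ n :=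
  stmt16_general P₀ D hP₀row hDrow hDrowsEq ε hε πe hπesum hπestat p hpsum j n
end

section
/- Let P₀, D be m×m stochastic matrices with D having identical rows; P_ε = (1-ε)P₀ + εD, ε ∈ (0,1], with stationary distribution π_ε. Fix N ≥ 1 and set Δ_N(P₀) = (1 - Q(P₀^N))^{1/N} where Q(A) = min_{i,j} ∑_k min(a_{ik},a_{jk}). Then for every initial distribution p̄, state j, and n ≥ 0, |p_{ε,p̄,j}(n) - π_{ε,j}| ≤ (1 - Q_{ε,p̄}) · Δ_N(P₀)^{⌊n/N⌋N} · (1-ε)^{⌊n/N⌋N}, where Q_{ε,p̄} = ∑_i min(p_i, π_{ε,i}). -/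
open Finset Matrix

/-- The `N`-step ergodicity coefficient `Δ_N(P₀) = (1 - Q(P₀^N))^{1/N}`. -/
noncomputable def ergDelta {m : ℕ} (P₀ : Matrix (Fin m) (Fin m) ℝ) (N : ℕ) : ℝ :=
  (1 - ergQ (P₀ ^ N)) ^ ((N : ℝ)⁻¹)

section AuxStmt17

variable {m : ℕ}

private lemma ergQ_le' (hm : 0 < m) (A : Matrix (Fin m) (Fin m) ℝ) (q : Fin m × Fin m) :
    ergQ A ≤ ∑ k, min (A q.1 k) (A q.2 k) := by
  haveI : Nonempty (Fin m) := ⟨⟨0, hm⟩⟩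
  exact ciInf_le (Set.Finite.bddBelow (Set.finite_range _)) q

private lemma le_ergQ' (hm : 0 < m) {A : Matrix (Fin m) (Fin m) ℝ} {c : ℝ}
    (h : ∀ q : Fin m × Fin m, c ≤ ∑ k, min (A q.1 k) (A q.2 k)) : c ≤ ergQ A := by
  haveI : Nonempty (Fin m) := ⟨⟨0, hm⟩⟩
  exact le_ciInf h

private lemma ergQ_le_one' (hm : 0 < m) {A : Matrix (Fin m) (Fin m) ℝ}
    (hrow : ∀ i, ∑ j, A i j = 1) : ergQ A ≤ 1 := by
  have := ergQ_le' hm A (⟨0, hm⟩, ⟨0, hm⟩)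
  simpa [hrow] using this

private lemma pow_entry_nonneg' {A : Matrix (Fin m) (Fin m) ℝ} (hA : ∀ i j, 0 ≤ A i j) :
    ∀ n i j, 0 ≤ (A ^ n) i j := by
  intro n
  induction n with
  | zero => intro i j; by_cases h : i = j <;> simp [Matrix.one_apply, h]
  | succ n ih =>
    intro i j
    rw [pow_succ, Matrix.mul_apply]
    exact Finset.sum_nonneg fun t _ => mul_nonneg (ih i t) (hA t j)

private lemma pow_row_sum' {A : Matrix (Fin m) (Fin m) ℝ} (hrow : ∀ i, ∑ j, A i j = 1) :
    ∀ n i, ∑ j, (A ^ n) i j = 1 := by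
  intro n
  induction n with
  | zero => intro i; simp [Matrix.one_apply]
  | succ n ih =>
    intro i
    simp only [pow_succ, Matrix.mul_apply]
    calc ∑ j, ∑ t, (A ^ n) i t * A t j = ∑ t, (A ^ n) i t * ∑ j, A t j := by
          rw [Finset.sum_comm]; simp [Finset.mul_sum]
      _ = 1 := by simp [hrow, ih]

private lemma l1_nonexpand' {P : Matrix (Fin m) (Fin m) ℝ} (hP : ∀ i j, 0 ≤ P i j)
    (hrow : ∀ i, ∑ j, P i j = 1) (x : Fin m → ℝ) :
    ∑ j, |∑ i, x i * P i j| ≤ ∑ i, |x i| := by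
  calc ∑ j, |∑ i, x i * P i j| ≤ ∑ j, ∑ i, |x i| * P i j := by
        refine Finset.sum_le_sum fun j _ => ?_
        refine (Finset.abs_sum_le_sum_abs _ _).trans ?_
        refine Finset.sum_le_sum fun i _ => ?_
        rw [abs_mul, abs_of_nonneg (hP i j)]
    _ = ∑ i, |x i| := by
        rw [Finset.sum_comm]
        simp [← Finset.mul_sum, hrow]

private lemma dobrushin' (hm : 0 < m) {P : Matrix (Fin m) (Fin m) ℝ} (hP : ∀ i j, 0 ≤ P i j)
    (hrow : ∀ i, ∑ j, P i j = 1) (x : Fin m → ℝ) (hx : ∑ i, x i = 0) :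
    ∑ j, |∑ i, x i * P i j| ≤ (1 - ergQ P) * ∑ i, |x i| := by
  set xp : Fin m → ℝ := fun i => max (x i) 0 with hxp
  set xn : Fin m → ℝ := fun i => max (-(x i)) 0 with hxn
  have hxpn : ∀ i, 0 ≤ xp i := fun i => le_max_right _ _
  have hxnn : ∀ i, 0 ≤ xn i := fun i => le_max_right _ _
  have hsplit : ∀ i, xp i - xn i = x i := by
    intro i; rcases le_total (x i) 0 with h | h
    · simp [hxp, hxn, max_eq_right h, max_eq_left (neg_nonneg.mpr h)]
    · simp [hxp, hxn, max_eq_left h, max_eq_right (neg_nonpos.mpr h)]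
  have habs : ∀ i, |x i| = xp i + xn i := by
    intro i; rcases le_total (x i) 0 with h | h
    · simp [hxp, hxn, max_eq_right h, max_eq_left (neg_nonneg.mpr h), abs_of_nonpos h]
    · simp [hxp, hxn, max_eq_left h, max_eq_right (neg_nonpos.mpr h), abs_of_nonneg h]
  set s := ∑ i, xp i with hs
  have hsn : ∑ i, xn i = s := by
    have h0 : ∑ i, (xp i - xn i) = 0 := by
      rw [Finset.sum_congr rfl fun i _ => hsplit i]; exact hx
    rw [Finset.sum_sub_distrib] at h0; rw [hs]; linarith
  have hs0 : 0 ≤ s := Finset.sum_nonneg fun i _ => hxpn i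
  have habs_sum : ∑ i, |x i| = 2 * s := by
    rw [Finset.sum_congr rfl fun i _ => habs i, Finset.sum_add_distrib, hsn, hs]; ring
  have hQ1 : ergQ P ≤ 1 := ergQ_le_one' hm hrow
  rcases eq_or_lt_of_le hs0 with hseq | hspos
  · have hx0 : ∀ i, x i = 0 := by
      intro i
      have h1 : xp i = 0 := le_antisymm (by
        calc xp i ≤ ∑ i', xp i' := Finset.single_le_sum (fun i' _ => hxpn i') (mem_univ i)
          _ = 0 := hseq.symm) (hxpn i)
      have h2 : xn i = 0 := le_antisymm (by
        calc xn i ≤ ∑ i', xn i' := Finset.single_le_sum (fun i' _ => hxnn i') (mem_univ i)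
          _ = 0 := by rw [hsn]; exact hseq.symm) (hxnn i)
      rw [← hsplit i, h1, h2]; ring
    simp only [hx0, zero_mul, Finset.sum_const_zero, abs_zero, mul_zero, le_refl]
  · have hsne : s ≠ 0 := ne_of_gt hspos
    have key : ∀ j, ∑ i, x i * P i j
        = s⁻¹ * ∑ i, ∑ i', xp i * xn i' * (P i j - P i' j) := by
      intro j
      have expand : ∑ i, ∑ i', xp i * xn i' * (P i j - P i' j)
          = (∑ i, xp i * P i j) * s - s * (∑ i', xn i' * P i' j) := by
        have hinner : ∀ i, ∑ i', xp i * xn i' * (P i j - P i' j)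
            = xp i * P i j * s - xp i * ∑ i', xn i' * P i' j := by
          intro i
          rw [← hsn, Finset.mul_sum, Finset.mul_sum, ← Finset.sum_sub_distrib]
          exact Finset.sum_congr rfl fun i' _ => by ring
        rw [Finset.sum_congr rfl fun i _ => hinner i, Finset.sum_sub_distrib,
            ← Finset.sum_mul, ← Finset.sum_mul]
      have hxP : ∑ i, x i * P i j = (∑ i, xp i * P i j) - ∑ i, xn i * P i j := by
        rw [← Finset.sum_sub_distrib]
        exact Finset.sum_congr rfl fun i _ => by rw [← hsplit i]; ring
      rw [hxP, expand]
      field_simp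
    have hpair : ∀ i i', ∑ j, |P i j - P i' j| ≤ 2 * (1 - ergQ P) := by
      intro i i'
      have h1 : ∑ j, |P i j - P i' j| = 2 - 2 * ∑ j, min (P i j) (P i' j) := by
        have hj : ∀ j, |P i j - P i' j| = P i j + P i' j - 2 * min (P i j) (P i' j) := by
          intro j; rcases le_total (P i j) (P i' j) with h | h
          · rw [min_eq_left h, abs_of_nonpos (by linarith)]; ring
          · rw [min_eq_right h, abs_of_nonneg (by linarith)]; ring
        rw [Finset.sum_congr rfl fun j _ => hj j, Finset.sum_sub_distrib,
            Finset.sum_add_distrib, hrow i, hrow i', ← Finset.mul_sum]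
        ring
      have h2 := ergQ_le' hm P (i, i')
      simp only at h2
      linarith
    calc ∑ j, |∑ i, x i * P i j|
        = ∑ j, |s⁻¹ * ∑ i, ∑ i', xp i * xn i' * (P i j - P i' j)| :=
          Finset.sum_congr rfl fun j _ => by rw [key j]
      _ ≤ ∑ j, s⁻¹ * ∑ i, ∑ i', xp i * xn i' * |P i j - P i' j| := by
          refine Finset.sum_le_sum fun j _ => ?_
          rw [abs_mul, abs_of_nonneg (inv_nonneg.mpr hs0)]
          refine mul_le_mul_of_nonneg_left ?_ (inv_nonneg.mpr hs0)
          calc |∑ i, ∑ i', xp i * xn i' * (P i j - P i' j)|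
              ≤ ∑ i, |∑ i', xp i * xn i' * (P i j - P i' j)| :=
                Finset.abs_sum_le_sum_abs _ _
            _ ≤ ∑ i, ∑ i', |xp i * xn i' * (P i j - P i' j)| :=
                Finset.sum_le_sum fun i _ => Finset.abs_sum_le_sum_abs _ _
            _ = ∑ i, ∑ i', xp i * xn i' * |P i j - P i' j| := by
                refine Finset.sum_congr rfl fun i _ => Finset.sum_congr rfl fun i' _ => ?_
                rw [abs_mul, abs_mul, abs_of_nonneg (hxpn i), abs_of_nonneg (hxnn i')]
      _ = s⁻¹ * ∑ i, ∑ i', xp i * xn i' * ∑ j, |P i j - P i' j| := by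
          rw [← Finset.mul_sum]
          congr 1
          rw [Finset.sum_comm]
          refine Finset.sum_congr rfl fun i _ => ?_
          rw [Finset.sum_comm]
          exact Finset.sum_congr rfl fun i' _ => by rw [Finset.mul_sum]
      _ ≤ s⁻¹ * ∑ i, ∑ i', xp i * xn i' * (2 * (1 - ergQ P)) := by
          refine mul_le_mul_of_nonneg_left ?_ (inv_nonneg.mpr hs0)
          exact Finset.sum_le_sum fun i _ => Finset.sum_le_sum fun i' _ =>
            mul_le_mul_of_nonneg_left (hpair i i') (mul_nonneg (hxpn i) (hxnn i'))
      _ = (1 - ergQ P) * ∑ i, |x i| := by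
          have h1 : ∀ i, ∑ i', xp i * xn i' * (2 * (1 - ergQ P))
              = (xp i * (2 * (1 - ergQ P))) * s := by
            intro i
            rw [← hsn, Finset.mul_sum]
            exact Finset.sum_congr rfl fun i' _ => by ring
          rw [Finset.sum_congr rfl fun i _ => h1 i, ← Finset.sum_mul, ← Finset.sum_mul, ← hs,
              habs_sum]
          field_simp

private lemma decomp' (P₀ D : Matrix (Fin m) (Fin m) ℝ)
    (hP₀nonneg : ∀ i j, 0 ≤ P₀ i j) (hP₀row : ∀ i, ∑ j, P₀ i j = 1)
    (hDnonneg : ∀ i j, 0 ≤ D i j) (hDrowsEq : ∀ i i' j, D i j = D i' j)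
    (ε : ℝ) (hε0 : 0 ≤ ε) (hε1 : ε ≤ 1) :
    ∀ a : ℕ, ∃ E : Matrix (Fin m) (Fin m) ℝ,
      ((1 - ε) • P₀ + ε • D) ^ a = ((1 - ε) ^ a) • (P₀ ^ a) + E ∧
      (∀ i i' k, E i k = E i' k) ∧ (∀ i k, 0 ≤ E i k) := by
  have h1ε : 0 ≤ 1 - ε := by linarith
  set P : Matrix (Fin m) (Fin m) ℝ := (1 - ε) • P₀ + ε • D with hP
  have hPnn : ∀ i j, 0 ≤ P i j := fun i j => by
    simp only [hP, Matrix.add_apply, Matrix.smul_apply, smul_eq_mul]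
    exact add_nonneg (mul_nonneg h1ε (hP₀nonneg i j)) (mul_nonneg hε0 (hDnonneg i j))
  intro a
  induction a with
  | zero => exact ⟨0, by simp, by simp, by simp⟩
  | succ a ih =>
    obtain ⟨E, hEeq, hErows, hEnn⟩ := ih
    refine ⟨(ε * (1 - ε) ^ a) • (P₀ ^ a * D) + E * P, ?_, ?_, ?_⟩
    · rw [pow_succ, hEeq, Matrix.add_mul, Matrix.smul_mul]
      nth_rewrite 1 [hP]
      rw [Matrix.mul_add, Matrix.mul_smul, Matrix.mul_smul, smul_add, smul_smul, smul_smul,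
          pow_succ (P₀), pow_succ (1 - ε)]
      module
    · intro i i' k
      simp only [Matrix.add_apply, Matrix.smul_apply, Matrix.mul_apply, smul_eq_mul]
      have h1 : ∑ t, (P₀ ^ a) i t * D t k = ∑ t, (P₀ ^ a) i' t * D t k := by
        have e1 : ∀ i₀ : Fin m, ∑ t, (P₀ ^ a) i₀ t * D t k = D i₀ k := by
          intro i₀
          calc ∑ t, (P₀ ^ a) i₀ t * D t k = ∑ t, (P₀ ^ a) i₀ t * D i₀ k :=
                Finset.sum_congr rfl fun t _ => by rw [hDrowsEq t i₀ k]
            _ = D i₀ k := by rw [← Finset.sum_mul, pow_row_sum' hP₀row a i₀, one_mul]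
        rw [e1 i, e1 i', hDrowsEq i i' k]
      have h2 : ∑ t, E i t * P t k = ∑ t, E i' t * P t k :=
        Finset.sum_congr rfl fun t _ => by rw [hErows i i' t]
      rw [h1, h2]
    · intro i k
      simp only [Matrix.add_apply, Matrix.smul_apply, Matrix.mul_apply, smul_eq_mul]
      refine add_nonneg (mul_nonneg (mul_nonneg hε0 (pow_nonneg h1ε a)) ?_) ?_
      · exact Finset.sum_nonneg fun t _ =>
          mul_nonneg (pow_entry_nonneg' hP₀nonneg a i t) (hDnonneg t k)
      · exact Finset.sum_nonneg fun t _ => mul_nonneg (hEnn i t) (hPnn t k)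

end AuxStmt17

/-- multi-step coupling bound. With `P_ε = (1-ε) P₀ + ε D` (`D` with identical
rows), stationary distribution `π_ε`, and `N ≥ 1`, for every initial distribution `p̄`,
state `j` and `n ≥ 0`:
`|p_{ε,p̄,j}(n) - π_{ε,j}| ≤ (1 - Q_{ε,p̄}) Δ_N(P₀)^{⌊n/N⌋N} (1-ε)^{⌊n/N⌋N}`,
where `Q_{ε,p̄} = ∑_i min (p_i) (π_{ε,i})` (convention `Δ_N(P₀)^0 = 1`). -/
theorem stmt17 {m : ℕ} (hm : 0 < m) (P₀ D : Matrix (Fin m) (Fin m) ℝ)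
    (hP₀nonneg : ∀ i j, 0 ≤ P₀ i j) (hP₀row : ∀ i, ∑ j, P₀ i j = 1)
    (hDnonneg : ∀ i j, 0 ≤ D i j) (hDrow : ∀ i, ∑ j, D i j = 1)
    (hDrowsEq : ∀ i i' j, D i j = D i' j)
    (ε : ℝ) (hε : ε ∈ Set.Ioc (0 : ℝ) 1)
    (πe : Fin m → ℝ) (hπenonneg : ∀ j, 0 ≤ πe j) (hπesum : ∑ j, πe j = 1)
    (hπestat : ∀ j, ∑ i, πe i * ((1 - ε) • P₀ + ε • D) i j = πe j)
    (N : ℕ) (hN : 1 ≤ N)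
    (p : Fin m → ℝ) (hpnonneg : ∀ i, 0 ≤ p i) (hpsum : ∑ i, p i = 1)
    (j : Fin m) (n : ℕ) :
    |(∑ i, p i * (((1 - ε) • P₀ + ε • D) ^ n) i j) - πe j|
      ≤ (1 - ∑ i, min (p i) (πe i)) * ergDelta P₀ N ^ (n / N * N)
          * (1 - ε) ^ (n / N * N) := by
  have hε0 : 0 < ε := hε.1
  have hε1 : ε ≤ 1 := hε.2
  have h1ε0 : 0 ≤ 1 - ε := by linarith
  set P : Matrix (Fin m) (Fin m) ℝ := (1 - ε) • P₀ + ε • D with hPdef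
  have hPnn : ∀ i j, 0 ≤ P i j := fun i j => by
    simp only [hPdef, Matrix.add_apply, Matrix.smul_apply, smul_eq_mul]
    exact add_nonneg (mul_nonneg h1ε0 (hP₀nonneg i j)) (mul_nonneg hε0.le (hDnonneg i j))
  have hProw : ∀ i, ∑ j, P i j = 1 := by
    intro i
    simp only [hPdef, Matrix.add_apply, Matrix.smul_apply, smul_eq_mul]
    rw [Finset.sum_add_distrib, ← Finset.mul_sum, ← Finset.mul_sum, hP₀row, hDrow]
    ring
  -- stationarity of powers
  have hstat : ∀ a j', ∑ i, πe i * (P ^ a) i j' = πe j' := by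
    intro a
    induction a with
    | zero => intro j'; simp [Matrix.one_apply]
    | succ a ih =>
      intro j'
      simp only [pow_succ, Matrix.mul_apply]
      calc ∑ i, πe i * ∑ t, (P ^ a) i t * P t j'
          = ∑ t, (∑ i, πe i * (P ^ a) i t) * P t j' := by
            simp only [Finset.mul_sum, Finset.sum_mul]
            rw [Finset.sum_comm]
            exact Finset.sum_congr rfl fun t _ => Finset.sum_congr rfl fun i _ => by ring
        _ = ∑ t, πe t * P t j' := by
            exact Finset.sum_congr rfl fun t _ => by rw [ih t]
        _ = πe j' := hπestat j'
  set v : ℕ → Fin m → ℝ := fun a j' => ∑ i, (p i - πe i) * (P ^ a) i j' with hv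
  have hgoal_eq : (∑ i, p i * (P ^ n) i j) - πe j = v n j := by
    simp only [hv]
    rw [← hstat n j, ← Finset.sum_sub_distrib]
    exact Finset.sum_congr rfl fun i _ => by ring
  have hvsum : ∀ a, ∑ j', v a j' = 0 := by
    intro a
    simp only [hv]
    rw [Finset.sum_comm]
    have h1 : ∀ i, ∑ j', (p i - πe i) * (P ^ a) i j' = p i - πe i := by
      intro i; rw [← Finset.mul_sum, pow_row_sum' hProw a i, mul_one]
    rw [Finset.sum_congr rfl fun i _ => h1 i, Finset.sum_sub_distrib, hpsum, hπesum]
    ring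
  have hvstep : ∀ a b j', v (a + b) j' = ∑ t, v a t * (P ^ b) t j' := by
    intro a b j'
    simp only [hv, pow_add, Matrix.mul_apply, Finset.mul_sum, Finset.sum_mul]
    rw [Finset.sum_comm]
    exact Finset.sum_congr rfl fun t _ => Finset.sum_congr rfl fun i _ => by ring
  have hmono : ∀ a b, ∑ j', |v (a + b) j'| ≤ ∑ j', |v a j'| := by
    intro a b
    induction b with
    | zero => simp
    | succ b ih =>
      have hstep1 : ∀ j', v (a + (b + 1)) j' = ∑ t, v (a + b) t * P t j' := by
        intro j'
        rw [show a + (b + 1) = (a + b) + 1 by ring, hvstep (a + b) 1 j']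
        simp [pow_one]
      calc ∑ j', |v (a + (b + 1)) j'| = ∑ j', |∑ t, v (a + b) t * P t j'| :=
            Finset.sum_congr rfl fun j' _ => by rw [hstep1 j']
        _ ≤ ∑ t, |v (a + b) t| := l1_nonexpand' hPnn hProw _
        _ ≤ _ := ih
  have hQP1 : ergQ (P ^ N) ≤ 1 := ergQ_le_one' hm (pow_row_sum' hProw N)
  have hdob : ∀ k : ℕ, ∑ j', |v (k * N) j'| ≤ (1 - ergQ (P ^ N)) ^ k * ∑ j', |v 0 j'| := by
    intro k
    induction k with
    | zero => simp
    | succ k ih =>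
      have hstepN : ∀ j', v ((k + 1) * N) j' = ∑ t, v (k * N) t * (P ^ N) t j' := by
        intro j'
        rw [show (k + 1) * N = k * N + N by ring]
        exact hvstep _ _ _
      calc ∑ j', |v ((k + 1) * N) j'| = ∑ j', |∑ t, v (k * N) t * (P ^ N) t j'| :=
            Finset.sum_congr rfl fun j' _ => by rw [hstepN j']
        _ ≤ (1 - ergQ (P ^ N)) * ∑ t, |v (k * N) t| :=
            dobrushin' hm (pow_entry_nonneg' hPnn N) (pow_row_sum' hProw N) _ (hvsum _)
        _ ≤ (1 - ergQ (P ^ N)) * ((1 - ergQ (P ^ N)) ^ k * ∑ j', |v 0 j'|) :=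
            mul_le_mul_of_nonneg_left ih (by linarith)
        _ = (1 - ergQ (P ^ N)) ^ (k + 1) * ∑ j', |v 0 j'| := by ring
  have hv0 : ∑ j', |v 0 j'| = 2 * (1 - ∑ i, min (p i) (πe i)) := by
    have h0 : ∀ j', v 0 j' = p j' - πe j' := by
      intro j'
      simp [hv, Matrix.one_apply]
    have habs : ∀ j', |p j' - πe j'| = p j' + πe j' - 2 * min (p j') (πe j') := by
      intro j'; rcases le_total (p j') (πe j') with h | h
      · rw [min_eq_left h, abs_of_nonpos (by linarith)]; ring
      · rw [min_eq_right h, abs_of_nonneg (by linarith)]; ring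
    calc ∑ j', |v 0 j'| = ∑ j', (p j' + πe j' - 2 * min (p j') (πe j')) :=
          Finset.sum_congr rfl fun j' _ => by rw [h0 j', habs j']
      _ = 2 * (1 - ∑ i, min (p i) (πe i)) := by
          rw [Finset.sum_sub_distrib, Finset.sum_add_distrib, hpsum, hπesum, ← Finset.mul_sum]
          ring
  have habs_le : |v n j| ≤ (∑ j', |v n j'|) / 2 := by
    have hsum := hvsum n
    have h1 : v n j + ∑ i ∈ Finset.univ.erase j, v n i = ∑ i, v n i :=
      Finset.add_sum_erase Finset.univ (v n) (Finset.mem_univ j)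
    have h2 : |v n j| ≤ ∑ i ∈ Finset.univ.erase j, |v n i| := by
      have hneg : v n j = -(∑ i ∈ Finset.univ.erase j, v n i) := by
        rw [hsum] at h1; linarith
      rw [hneg, abs_neg]
      exact Finset.abs_sum_le_sum_abs _ _
    have h3 : |v n j| + ∑ i ∈ Finset.univ.erase j, |v n i| = ∑ i, |v n i| :=
      Finset.add_sum_erase Finset.univ (fun i => |v n i|) (Finset.mem_univ j)
    linarith
  -- key coupling inequality
  have hkey : 1 - ergQ (P ^ N) ≤ (1 - ε) ^ N * (1 - ergQ (P₀ ^ N)) := by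
    obtain ⟨E, hEeq, hErows, hEnn⟩ :=
      decomp' P₀ D hP₀nonneg hP₀row hDnonneg hDrowsEq ε hε0.le hε1 N
    have hErow : ∀ i, ∑ k, E i k = 1 - (1 - ε) ^ N := by
      intro i
      have h1 := pow_row_sum' hProw N i
      rw [hEeq] at h1
      simp only [Matrix.add_apply, Matrix.smul_apply, smul_eq_mul] at h1
      rw [Finset.sum_add_distrib, ← Finset.mul_sum, pow_row_sum' hP₀row N i] at h1
      linarith
    have hq : (1 - ε) ^ N * ergQ (P₀ ^ N) + (1 - (1 - ε) ^ N) ≤ ergQ (P ^ N) := by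
      apply le_ergQ' hm
      intro q
      have heq : ∑ k, min ((P ^ N) q.1 k) ((P ^ N) q.2 k)
          = (1 - ε) ^ N * ∑ k, min ((P₀ ^ N) q.1 k) ((P₀ ^ N) q.2 k) + (1 - (1 - ε) ^ N) := by
        rw [← hErow q.1, Finset.mul_sum, ← Finset.sum_add_distrib]
        refine Finset.sum_congr rfl fun k _ => ?_
        rw [hEeq]
        simp only [Matrix.add_apply, Matrix.smul_apply, smul_eq_mul]
        rw [hErows q.2 q.1 k]
        have hc : (0:ℝ) ≤ (1 - ε) ^ N := pow_nonneg h1ε0 N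
        rcases le_total ((P₀ ^ N) q.1 k) ((P₀ ^ N) q.2 k) with h | h
        · rw [min_eq_left h, min_eq_left (by nlinarith)]
        · rw [min_eq_right h, min_eq_right (by nlinarith)]
      rw [heq]
      have hQle := ergQ_le' hm (P₀ ^ N) q
      have hc : (0:ℝ) ≤ (1 - ε) ^ N := pow_nonneg h1ε0 N
      nlinarith
    linarith
  have hQ0nn : 0 ≤ ergQ (P₀ ^ N) :=
    le_ergQ' hm fun q => Finset.sum_nonneg fun k _ =>
      le_min (pow_entry_nonneg' hP₀nonneg N _ _) (pow_entry_nonneg' hP₀nonneg N _ _)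
  have hQ0le1 : ergQ (P₀ ^ N) ≤ 1 := ergQ_le_one' hm (pow_row_sum' hP₀row N)
  have hNne : (N : ℝ) ≠ 0 := Nat.cast_ne_zero.mpr (by omega)
  have hdelta : ∀ k : ℕ, ergDelta P₀ N ^ (k * N) = (1 - ergQ (P₀ ^ N)) ^ k := by
    intro k
    have hx : (0:ℝ) ≤ 1 - ergQ (P₀ ^ N) := by linarith
    rw [ergDelta, ← Real.rpow_natCast ((1 - ergQ (P₀ ^ N)) ^ ((N : ℝ)⁻¹)) (k * N),
        ← Real.rpow_mul hx]
    rw [show (N : ℝ)⁻¹ * ((k * N : ℕ) : ℝ) = (k : ℝ) by push_cast; field_simp]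
    rw [Real.rpow_natCast]
  set k := n / N with hk
  set l := n % N with hl
  have hn : n = k * N + l := by rw [hk, hl, Nat.mul_comm]; exact (Nat.div_add_mod n N).symm
  have hminle : ∑ i, min (p i) (πe i) ≤ 1 := by
    calc ∑ i, min (p i) (πe i) ≤ ∑ i, p i :=
          Finset.sum_le_sum fun i _ => min_le_left _ _
      _ = 1 := hpsum
  have hδnn : 0 ≤ 1 - ergQ (P ^ N) := by linarith
  have hmain : |v n j| ≤ (1 - ∑ i, min (p i) (πe i)) * (1 - ergQ (P ^ N)) ^ k := by
    have h1 : ∑ j', |v n j'| ≤ ∑ j', |v (k * N) j'| := by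
      nth_rewrite 1 [hn]; exact hmono (k * N) l
    have h2 := hdob k
    rw [hv0] at h2
    have h3 : 0 ≤ (1 - ergQ (P ^ N)) ^ k := pow_nonneg hδnn k
    nlinarith [habs_le]
  have hc2 : (1 - ergQ (P ^ N)) ^ k ≤ ((1 - ε) ^ N * (1 - ergQ (P₀ ^ N))) ^ k :=
    pow_le_pow_left₀ hδnn hkey k
  have hrhs : ((1 - ε) ^ N * (1 - ergQ (P₀ ^ N))) ^ k
      = ergDelta P₀ N ^ (k * N) * (1 - ε) ^ (k * N) := by
    rw [mul_pow, hdelta k, ← pow_mul, Nat.mul_comm N k]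
    ring
  rw [hgoal_eq]
  calc |v n j| ≤ (1 - ∑ i, min (p i) (πe i)) * (1 - ergQ (P ^ N)) ^ k := hmain
    _ ≤ (1 - ∑ i, min (p i) (πe i)) * (ergDelta P₀ N ^ (k * N) * (1 - ε) ^ (k * N)) := by
        rw [← hrhs]
        exact mul_le_mul_of_nonneg_left hc2 (by linarith)
    _ = (1 - ∑ i, min (p i) (πe i)) * ergDelta P₀ N ^ (k * N) * (1 - ε) ^ (k * N) := by
        ring
end

section
/- Suppose the phase space X of the Markov chain with stochastic matrix P₀ splits into h ≥ 2 disjoint nonempty closed classes X^(1),…,X^(h), each aperiodic and irreducible for P₀ with stationary distribution π₀^(j) on X^(j). Let π_ε be the stationary distribution of P_ε = (1-ε)P₀ + εD, where D has identical rows equal to a positive probability vector d. Then for every k ∈ X^(j), π_{ε,k} → f^(j)_d · π^(j)_{0,k} as ε → 0+, where f^(j)_d = ∑_{i ∈ X^(j)} d_i. -/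
open Finset Matrix Filter

set_option maxHeartbeats 1600000 in
/-- singularly perturbed case. The phase space splits into `h ≥ 2` disjoint
nonempty closed classes `C j`, each ergodic (aperiodic and irreducible) for `P₀` with
stationary distribution `π₀^{(j)}` (expressed by the ergodic convergence
`(P₀^n)_{rk} → π₀^{(j)}_k` for `r, k` in the class). Let `π_ε` be the stationary
distribution of `P_ε = (1-ε) P₀ + ε D`, `D` with identical rows equal to the positive
probability vector `d`. Then for `k ∈ C j`, `π_{ε,k} → f^{(j)}_d · π₀^{(j)}_k` as `ε → 0+`,
where `f^{(j)}_d = ∑_{i ∈ C j} d_i`. -/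
theorem stmt18 {m h : ℕ} (hh : 2 ≤ h)
    (P₀ D : Matrix (Fin m) (Fin m) ℝ)
    (hP₀nonneg : ∀ i j, 0 ≤ P₀ i j) (hP₀row : ∀ i, ∑ j, P₀ i j = 1)
    (d : Fin m → ℝ) (hd : ∀ i, 0 < d i) (hdsum : ∑ i, d i = 1)
    (hD : ∀ i j, D i j = d j)
    (C : Fin h → Finset (Fin m))
    (hCne : ∀ j, (C j).Nonempty)
    (hCdisj : ∀ j j', j ≠ j' → Disjoint (C j) (C j'))
    (hCcover : ∀ i, ∃ j, i ∈ C j)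
    (hCclosed : ∀ j, ∀ i ∈ C j, ∀ k, k ∉ C j → P₀ i k = 0)
    (π₀ : Fin h → Fin m → ℝ)
    (hπ₀pos : ∀ j, ∀ k ∈ C j, 0 < π₀ j k)
    (hπ₀sum : ∀ j, ∑ k ∈ C j, π₀ j k = 1)
    (herg : ∀ j, ∀ r ∈ C j, ∀ k ∈ C j,
      Tendsto (fun n : ℕ => (P₀ ^ n) r k) atTop (nhds (π₀ j k)))
    (πe : ℝ → Fin m → ℝ)
    (hπe : ∀ ε ∈ Set.Ioc (0 : ℝ) 1,
      (∀ k, 0 ≤ πe ε k) ∧ (∑ k, πe ε k = 1) ∧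
      (∀ k, ∑ i, πe ε i * ((1 - ε) • P₀ + ε • D) i k = πe ε k))
    (j : Fin h) (k : Fin m) (hk : k ∈ C j) :
    Tendsto (fun ε : ℝ => πe ε k) (nhdsWithin 0 (Set.Ioi 0))
      (nhds ((∑ i ∈ C j, d i) * π₀ j k)) := by
  -- powers of P₀ are stochastic
  have hPn : ∀ n : ℕ, (∀ i t, 0 ≤ (P₀ ^ n) i t) ∧ (∀ i, ∑ t, (P₀ ^ n) i t = 1) := by
    intro n
    induction n with
    | zero =>
      constructor
      · intro i t
        simp only [pow_zero, Matrix.one_apply]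
        split <;> norm_num
      · intro i
        simp [pow_zero, Matrix.one_apply]
    | succ n ih =>
      constructor
      · intro i t
        rw [pow_succ, Matrix.mul_apply]
        exact Finset.sum_nonneg fun s _ => mul_nonneg (ih.1 i s) (hP₀nonneg s t)
      · intro i
        simp only [pow_succ, Matrix.mul_apply]
        rw [Finset.sum_comm]
        simp_rw [← Finset.mul_sum, hP₀row, mul_one]
        exact ih.2 i
  have hP1 : ∀ (n : ℕ) (i t), (P₀ ^ n) i t ≤ 1 := by
    intro n i t
    calc (P₀ ^ n) i t ≤ ∑ s, (P₀ ^ n) i s :=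
          Finset.single_le_sum (fun s _ => (hPn n).1 i s) (Finset.mem_univ t)
      _ = 1 := (hPn n).2 i
  -- closed classes stay closed under powers
  have hclosed : ∀ (n : ℕ) (j' : Fin h), ∀ i ∈ C j', ∀ t, t ∉ C j' → (P₀ ^ n) i t = 0 := by
    intro n
    induction n with
    | zero =>
      intro j' i hi t ht
      have hne : i ≠ t := fun e => ht (e ▸ hi)
      simp [pow_zero, Matrix.one_apply, hne]
    | succ n ih =>
      intro j' i hi t ht
      rw [pow_succ', Matrix.mul_apply]
      apply Finset.sum_eq_zero
      intro s _
      by_cases hs : s ∈ C j'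
      · rw [ih j' s hs t ht, mul_zero]
      · rw [hCclosed j' i hi s hs, zero_mul]
  set a : ℕ → ℝ := fun l => ∑ i, d i * (P₀ ^ l) i k with ha
  set L : ℝ := (∑ i ∈ C j, d i) * π₀ j k with hLdef
  have haeq : ∀ l, a l = ∑ i ∈ C j, d i * (P₀ ^ l) i k := by
    intro l
    rw [ha]
    symm
    apply Finset.sum_subset (Finset.subset_univ _)
    intro i _ hi
    obtain ⟨j', hj'⟩ := hCcover i
    have hjj : j' ≠ j := by rintro rfl; exact hi hj'
    have hknot : k ∉ C j' := fun hkm => (Finset.disjoint_left.1 (hCdisj j' j hjj)) hkm hk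
    rw [hclosed l j' i hj' k hknot, mul_zero]
  have hconv : Tendsto a atTop (nhds L) := by
    have h1 : Tendsto (fun l : ℕ => ∑ i ∈ C j, d i * (P₀ ^ l) i k) atTop
        (nhds (∑ i ∈ C j, d i * π₀ j k)) :=
      tendsto_finset_sum _ fun i hi => (herg j i hi k hk).const_mul (d i)
    have h2 : L = ∑ i ∈ C j, d i * π₀ j k := by rw [hLdef, Finset.sum_mul]
    rw [h2]
    exact h1.congr fun l => (haeq l).symm
  have ha0 : ∀ l, 0 ≤ a l :=
    fun l => Finset.sum_nonneg fun i _ => mul_nonneg (hd i).le ((hPn l).1 i k)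
  have ha1 : ∀ l, a l ≤ 1 := by
    intro l
    calc a l ≤ ∑ i, d i * 1 :=
          Finset.sum_le_sum fun i _ => mul_le_mul_of_nonneg_left (hP1 l i k) (hd i).le
      _ = 1 := by simp [hdsum]
  have hL0 : 0 ≤ L := by
    rw [hLdef]
    exact mul_nonneg (Finset.sum_nonneg fun i _ => (hd i).le) (hπ₀pos j k hk).le
  have hL1 : L ≤ 1 := by
    rw [hLdef]
    have h1 : ∑ i ∈ C j, d i ≤ 1 := by
      rw [← hdsum]
      exact Finset.sum_le_sum_of_subset_of_nonneg (Finset.subset_univ _)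
        (fun i _ _ => (hd i).le)
    have h2 : π₀ j k ≤ 1 := by
      rw [← hπ₀sum j]
      exact Finset.single_le_sum (fun t ht => (hπ₀pos j t ht).le) hk
    calc (∑ i ∈ C j, d i) * π₀ j k ≤ 1 * 1 :=
          mul_le_mul h1 h2 (hπ₀pos j k hk).le zero_le_one
      _ = 1 := by norm_num
  -- the key recurrence
  have key : ∀ ε ∈ Set.Ioc (0:ℝ) 1, ∀ n : ℕ,
      (∑ i, πe ε i * (P₀ ^ n) i k) =
        (1 - ε) * (∑ i, πe ε i * (P₀ ^ (n+1)) i k) + ε * a n := by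
    intro ε hε n
    obtain ⟨hpos, hsum, hfix⟩ := hπe ε hε
    have expand : ∀ t i, ((1 - ε) • P₀ + ε • D) t i = (1 - ε) * P₀ t i + ε * d i := by
      intro t i
      simp [Matrix.add_apply, Matrix.smul_apply, hD, smul_eq_mul]
    calc ∑ i, πe ε i * (P₀ ^ n) i k
        = ∑ i, (∑ t, πe ε t * ((1 - ε) * P₀ t i + ε * d i)) * (P₀ ^ n) i k := by
          refine Finset.sum_congr rfl fun i _ => ?_
          rw [← hfix i]
          congr 1
          exact Finset.sum_congr rfl fun t _ => by rw [expand]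
      _ = ∑ t, ∑ i, πe ε t * ((1 - ε) * P₀ t i + ε * d i) * (P₀ ^ n) i k := by
          simp_rw [Finset.sum_mul]
          rw [Finset.sum_comm]
      _ = ∑ t, πe ε t * ((1 - ε) * (∑ i, P₀ t i * (P₀ ^ n) i k) + ε * a n) := by
          refine Finset.sum_congr rfl fun t _ => ?_
          rw [ha]
          simp only [mul_add, add_mul, Finset.mul_sum, Finset.sum_add_distrib]
          congr 1 <;> exact Finset.sum_congr rfl fun i _ => by ring
      _ = (1 - ε) * (∑ i, πe ε i * (P₀ ^ (n+1)) i k) + ε * a n := by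
          simp only [mul_add, Finset.sum_add_distrib]
          congr 1
          · rw [Finset.mul_sum]
            refine Finset.sum_congr rfl fun t _ => ?_
            rw [pow_succ', Matrix.mul_apply]
            ring
          · have : ∀ t : Fin m, πe ε t * (ε * a n) = (ε * a n) * πe ε t := fun t => by ring
            simp_rw [this]
            rw [← Finset.mul_sum, hsum, mul_one]
  -- the explicit formula
  have formula : ∀ ε ∈ Set.Ioc (0:ℝ) 1, ∀ n : ℕ,
      πe ε k = ε * ∑ l ∈ Finset.range n, (1 - ε) ^ l * a l
        + (1 - ε) ^ n * ∑ i, πe ε i * (P₀ ^ n) i k := by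
    intro ε hε n
    induction n with
    | zero =>
      simp [pow_zero, Matrix.one_apply, Finset.mul_sum]
    | succ n ih =>
      rw [ih, key ε hε n, Finset.sum_range_succ]
      ring
  -- bounds on the remainder
  have hRb : ∀ ε ∈ Set.Ioc (0:ℝ) 1, ∀ n : ℕ,
      0 ≤ (∑ i, πe ε i * (P₀ ^ n) i k) ∧ (∑ i, πe ε i * (P₀ ^ n) i k) ≤ 1 := by
    intro ε hε n
    obtain ⟨hpos, hsum, _⟩ := hπe ε hε
    constructor
    · exact Finset.sum_nonneg fun i _ => mul_nonneg (hpos i) ((hPn n).1 i k)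
    · calc (∑ i, πe ε i * (P₀ ^ n) i k) ≤ ∑ i, πe ε i * 1 :=
            Finset.sum_le_sum fun i _ => mul_le_mul_of_nonneg_left (hP1 n i k) (hpos i)
        _ = 1 := by simpa using hsum
  -- ε-δ argument
  rw [Metric.tendsto_nhdsWithin_nhds]
  intro δ hδ
  obtain ⟨N, hN⟩ := (Metric.tendsto_atTop.1 hconv) (δ / 6) (by positivity)
  refine ⟨min 1 (δ / (12 * (N + 1))), lt_min one_pos (by positivity), ?_⟩
  intro ε hεmem hdist
  have hε0 : 0 < ε := hεmem
  rw [Real.dist_eq, sub_zero, abs_of_pos hε0] at hdist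
  have hε1 : ε < 1 := lt_of_lt_of_le hdist (min_le_left _ _)
  have hεN : ε ≤ δ / (12 * (N + 1)) := le_of_lt (lt_of_lt_of_le hdist (min_le_right _ _))
  have hεIoc : ε ∈ Set.Ioc (0:ℝ) 1 := ⟨hε0, hε1.le⟩
  set q : ℝ := 1 - ε with hq
  have hq0 : 0 < q := by rw [hq]; linarith
  have hq1 : q < 1 := by rw [hq]; linarith
  -- pick n ≥ N with q^n small
  obtain ⟨n₀, hn₀⟩ := exists_pow_lt_of_lt_one (show (0:ℝ) < δ / 12 by positivity) hq1
  set n : ℕ := max n₀ N with hn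
  have hNn : N ≤ n := le_max_right _ _
  have hqn : q ^ n < δ / 12 :=
    lt_of_le_of_lt (pow_le_pow_of_le_one hq0.le hq1.le (le_max_left _ _)) hn₀
  set R : ℝ := ∑ i, πe ε i * (P₀ ^ n) i k with hR
  have hform := formula ε hεIoc n
  rw [← hq, ← hR] at hform
  have geom : ∀ nn : ℕ, ε * ∑ l ∈ Finset.range nn, q ^ l = 1 - q ^ nn := by
    intro nn
    induction nn with
    | zero => simp
    | succ nn ih =>
      rw [Finset.sum_range_succ, mul_add, ih, pow_succ, hq]
      ring
  set S : ℝ := ∑ l ∈ Finset.range n, q ^ l with hS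
  have geomS : ε * S = 1 - q ^ n := by rw [hS]; exact geom n
  have hsplit : (∑ l ∈ Finset.range n, q ^ l * (a l - L))
      = (∑ l ∈ Finset.range n, q ^ l * a l) - S * L := by
    rw [hS, Finset.sum_mul, ← Finset.sum_sub_distrib]
    exact Finset.sum_congr rfl fun l _ => by ring
  have hdiff : πe ε k - L
      = ε * (∑ l ∈ Finset.range n, q ^ l * (a l - L)) + q ^ n * (R - L) := by
    linear_combination hform - ε * hsplit + L * geomS
  rw [Real.dist_eq]
  -- bound the sum SaL
  have habs : |∑ l ∈ Finset.range n, q ^ l * (a l - L)| ≤ 2 * N + (δ / 6) * S := by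
    calc |∑ l ∈ Finset.range n, q ^ l * (a l - L)|
        ≤ ∑ l ∈ Finset.range n, |q ^ l * (a l - L)| := Finset.abs_sum_le_sum_abs _ _
      _ = ∑ l ∈ Finset.range N, |q ^ l * (a l - L)| + ∑ l ∈ Finset.Ico N n, |q ^ l * (a l - L)| :=
          (Finset.sum_range_add_sum_Ico _ hNn).symm
      _ ≤ ∑ l ∈ Finset.range N, (2:ℝ) + ∑ l ∈ Finset.Ico N n, (δ / 6) * q ^ l := by
          gcongr with l hl l hl
          · rw [abs_mul, abs_pow, abs_of_pos hq0]
            have h1 : q ^ l ≤ 1 := pow_le_one₀ hq0.le hq1.le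
            have h2 : |a l - L| ≤ 2 := by
              rw [abs_sub_le_iff]
              constructor <;> nlinarith [ha0 l, ha1 l]
            nlinarith [abs_nonneg (a l - L), pow_nonneg hq0.le l]
          · rw [abs_mul, abs_pow, abs_of_pos hq0, mul_comm (q ^ l)]
            have h2 : |a l - L| ≤ δ / 6 := by
              have := hN l (Finset.mem_Ico.1 hl).1
              rw [Real.dist_eq] at this
              exact this.le
            exact mul_le_mul_of_nonneg_right h2 (pow_nonneg hq0.le l)
      _ ≤ 2 * N + (δ / 6) * S := by
          rw [Finset.sum_const, Finset.card_range, nsmul_eq_mul, ← Finset.mul_sum]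
          have : ∑ l ∈ Finset.Ico N n, q ^ l ≤ S := by
            rw [hS, Finset.range_eq_Ico]
            exact Finset.sum_le_sum_of_subset_of_nonneg
              (Finset.Ico_subset_Ico (Nat.zero_le N) le_rfl)
              (fun l _ _ => pow_nonneg hq0.le l)
          have hδ6 : (0:ℝ) ≤ δ / 6 := by positivity
          have h3 := mul_le_mul_of_nonneg_left this hδ6
          linarith
  have hεS : ε * S ≤ 1 := by
    rw [geomS]
    have : 0 ≤ q ^ n := pow_nonneg hq0.le n
    linarith
  have hS0 : 0 ≤ S := Finset.sum_nonneg fun l _ => pow_nonneg hq0.le l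
  have hRL : |R - L| ≤ 2 := by
    obtain ⟨hr0, hr1⟩ := hRb ε hεIoc n
    rw [abs_sub_le_iff]
    constructor <;> linarith
  calc |πe ε k - L|
      = |ε * (∑ l ∈ Finset.range n, q ^ l * (a l - L)) + q ^ n * (R - L)| := by rw [hdiff]
    _ ≤ |ε * (∑ l ∈ Finset.range n, q ^ l * (a l - L))| + |q ^ n * (R - L)| := abs_add_le _ _
    _ = ε * |∑ l ∈ Finset.range n, q ^ l * (a l - L)| + q ^ n * |R - L| := by
        rw [abs_mul, abs_mul, abs_of_pos hε0, abs_pow, abs_of_pos hq0]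
    _ ≤ ε * (2 * N + (δ / 6) * S) + q ^ n * 2 :=
        add_le_add (mul_le_mul_of_nonneg_left habs hε0.le)
          (mul_le_mul_of_nonneg_left hRL (pow_nonneg hq0.le n))
    _ = 2 * (ε * N) + (δ / 6) * (ε * S) + 2 * q ^ n := by ring
    _ ≤ 2 * (ε * N) + δ / 6 + 2 * q ^ n := by
        have hδ6 : (0:ℝ) ≤ δ / 6 := by positivity
        nlinarith [hεS]
    _ < δ := by
        have h12 : ε * (12 * ((N:ℝ) + 1)) ≤ δ := by
          rw [le_div_iff₀ (by positivity : (0:ℝ) < 12 * ((N:ℝ) + 1))] at hεN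
          exact hεN
        have he1 : ε * (12 * ((N:ℝ) + 1)) = 12 * (ε * ((N:ℝ) + 1)) := by ring
        have he2 : ε * ((N:ℝ) + 1) = ε * (N:ℝ) + ε := by ring
        linarith [hqn, hε0]
end

section
/- Under the singular decomposition into h closed aperiodic classes with exponential ergodicity constants (each class j satisfying Δ^(j)_N(P₀) < 1 for some N ≥ 1), let p̄ be any initial distribution, and let f^(j)_p = ∑_{i∈X^(j)} p_i, f^(j)_d = ∑_{i∈X^(j)} d_i. If n_ε → ∞ and ε n_ε → t ∈ (0,∞) as ε → 0+, then for k ∈ X^(j), p_{ε,p̄,k}(n_ε) → π_{0,p̄,k} e^{-t} + π_{0,d̄,k}(1 - e^{-t}) as ε → 0+, where π_{0,p̄,k} = f^(j)_p π^(j)_{0,k} and π_{0,d̄,k} = f^(j)_d π^(j)_{0,k}. -/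
/-!
Conditioning on the last time the perturbed chain resampled from `d` gives the renewal identity
`p_ε(n) = (1-ε)^n p₀(n) + ∑_{l<n} ε(1-ε)^l d₀(l)`. On a closed class the coupling (Dobrushin)
bound shrinks the spread of every column of `P₀ ^ N` by a factor `1 - δ`, so the rows of `P₀ ^ n`
indexed by the class converge to `π₀`, while rows outside the class never reach it. Finally
`(1-ε)^{n_ε} → e^{-t}`, and the weights `ε(1-ε)^l`, of total mass `1 - (1-ε)^{n_ε}`, are
individually negligible, so they average the convergent sequence `d₀(l)` to its limit.
-/

open Finset Matrix Filter Topology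

theorem Finset.sum_mul_sub_sum_mul_le {ι : Type*} (S : Finset ι) {a b c : ι → ℝ} {δ D : ℝ}
    (ha : ∑ i ∈ S, a i = 1) (hb : ∑ i ∈ S, b i = 1) (hδ : δ ≤ ∑ i ∈ S, min (a i) (b i))
    (hc : ∀ i ∈ S, ∀ j ∈ S, c i - c j ≤ D) :
    ∑ i ∈ S, a i * c i - ∑ i ∈ S, b i * c i ≤ (1 - δ) * D := by
  have hS : S.Nonempty := nonempty_of_sum_ne_zero (by rw [ha]; exact one_ne_zero)
  obtain ⟨iₘₐₓ, hmaxS, hmax⟩ := S.exists_max_image c hS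
  obtain ⟨iₘᵢₙ, hminS, hmin⟩ := S.exists_min_image c hS
  set μ := fun i => min (a i) (b i)
  -- the common part `μ` of the two rows cancels, leaving mass `1 - ∑ μ` on each side
  have hupper : ∑ i ∈ S, (a i - μ i) * c i ≤ (1 - ∑ i ∈ S, μ i) * c iₘₐₓ := by
    rw [← ha, ← sum_sub_distrib, sum_mul]
    exact sum_le_sum fun i hi =>
      mul_le_mul_of_nonneg_left (hmax i hi) (sub_nonneg.2 (min_le_left _ _))
  have hlower : (1 - ∑ i ∈ S, μ i) * c iₘᵢₙ ≤ ∑ i ∈ S, (b i - μ i) * c i := by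
    rw [← hb, ← sum_sub_distrib, sum_mul]
    exact sum_le_sum fun i hi =>
      mul_le_mul_of_nonneg_left (hmin i hi) (sub_nonneg.2 (min_le_right _ _))
  have hμ : ∑ i ∈ S, μ i ≤ 1 := ha ▸ sum_le_sum fun i _ => min_le_left _ _
  calc ∑ i ∈ S, a i * c i - ∑ i ∈ S, b i * c i
      = ∑ i ∈ S, (a i - μ i) * c i - ∑ i ∈ S, (b i - μ i) * c i := by
        simp only [sub_mul, sum_sub_distrib]; ring
    _ ≤ (1 - ∑ i ∈ S, μ i) * (c iₘₐₓ - c iₘᵢₙ) := by linarith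
    _ ≤ (1 - δ) * D :=
        mul_le_mul (by linarith) (hc _ hmaxS _ hminS) (sub_nonneg.2 (hmin _ hmaxS)) (by linarith)

namespace Matrix

variable {ι : Type*} [Fintype ι] [DecidableEq ι]

theorem pow_mulVec_eq_self {P : Matrix ι ι ℝ} {v : ι → ℝ} (hP : P *ᵥ v = v) (n : ℕ) :
    P ^ n *ᵥ v = v := by
  induction n with
  | zero => simp
  | succ n ih => rw [pow_succ, ← mulVec_mulVec, hP, ih]

section ClosedClass

variable {P : Matrix ι ι ℝ} {S : Finset ι} (hS : ∀ i ∈ S, ∀ k, k ∉ S → P i k = 0)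
include hS

theorem pow_apply_eq_zero_of_closed (n : ℕ) {i k : ι} (hi : i ∈ S) (hk : k ∉ S) :
    (P ^ n) i k = 0 := by
  induction n generalizing k with
  | zero => simp [show i ≠ k by rintro rfl; exact hk hi]
  | succ n ih =>
    rw [pow_succ, mul_apply]
    refine sum_eq_zero fun l _ => ?_
    by_cases hl : l ∈ S
    · rw [hS l hl k hk, mul_zero]
    · rw [ih hl, zero_mul]

theorem pow_add_apply_of_closed (a b : ℕ) {i : ι} (hi : i ∈ S) (k : ι) :
    (P ^ (a + b)) i k = ∑ l ∈ S, (P ^ a) i l * (P ^ b) l k := by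
  rw [pow_add, mul_apply]
  exact (sum_subset (subset_univ S) fun l _ hl => by
    rw [pow_apply_eq_zero_of_closed hS a hi hl, zero_mul]).symm

theorem sum_pow_apply_of_closed (hP : P *ᵥ 1 = 1) (n : ℕ) {i : ι} (hi : i ∈ S) :
    ∑ l ∈ S, (P ^ n) i l = 1 := by
  rw [sum_subset (subset_univ S) fun l _ hl => pow_apply_eq_zero_of_closed hS n hi hl]
  simpa [mulVec, dotProduct] using congrFun (pow_mulVec_eq_self hP n) i

theorem sum_mul_pow_apply_of_closed {π : ι → ℝ} (hπ : ∀ k ∈ S, ∑ r ∈ S, π r * P r k = π k)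
    (n : ℕ) {k : ι} (hk : k ∈ S) : ∑ r ∈ S, π r * (P ^ n) r k = π k := by
  induction n generalizing k with
  | zero => simp [one_apply, hk]
  | succ n ih =>
    rw [add_comm]
    calc ∑ r ∈ S, π r * (P ^ (1 + n)) r k
        = ∑ r ∈ S, ∑ l ∈ S, π r * (P r l * (P ^ n) l k) := sum_congr rfl fun r hr => by
          rw [pow_add_apply_of_closed hS 1 n hr, pow_one, mul_sum]
      _ = ∑ l ∈ S, (∑ r ∈ S, π r * P r l) * (P ^ n) l k := by
          rw [sum_comm]; simp only [sum_mul, mul_assoc]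
      _ = ∑ l ∈ S, π l * (P ^ n) l k := sum_congr rfl fun l hl => by rw [hπ l hl]
      _ = π k := ih hk

theorem pow_apply_sub_pow_apply_le (hP : P *ᵥ 1 = 1) {N : ℕ} (hN : 0 < N) {δ K : ℝ}
    (hδ : ∀ i ∈ S, ∀ j ∈ S, δ ≤ ∑ l ∈ S, min ((P ^ N) i l) ((P ^ N) j l)) {k : ι}
    (hK : ∀ n < N, ∀ i ∈ S, ∀ j ∈ S, (P ^ n) i k - (P ^ n) j k ≤ K) (n : ℕ) :
    ∀ i ∈ S, ∀ j ∈ S, (P ^ n) i k - (P ^ n) j k ≤ (1 - δ) ^ (n / N) * K := by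
  induction n using Nat.strong_induction_on with
  | _ n ih =>
    obtain hn | hn := lt_or_ge n N
    · simpa [Nat.div_eq_of_lt hn] using hK n hn
    obtain ⟨m, rfl⟩ := Nat.exists_eq_add_of_le hn
    intro i hi j hj
    rw [pow_add_apply_of_closed hS N m hi, pow_add_apply_of_closed hS N m hj,
      Nat.add_div_left _ hN, pow_succ', mul_assoc]
    exact sum_mul_sub_sum_mul_le S (sum_pow_apply_of_closed hS hP N hi)
      (sum_pow_apply_of_closed hS hP N hj) (hδ i hi j hj) (ih m (by omega))

theorem tendsto_pow_apply_of_closed (hP : P *ᵥ 1 = 1) {N : ℕ} (hN : 0 < N)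
    (hmin : ∀ r ∈ S, ∀ k ∈ S, 0 < ∑ i ∈ S, min ((P ^ N) r i) ((P ^ N) k i))
    {π : ι → ℝ} (hπsum : ∑ k ∈ S, π k = 1) (hπ : ∀ k ∈ S, ∑ r ∈ S, π r * P r k = π k)
    {k : ι} (hk : k ∈ S) {r : ι} (hr : r ∈ S) :
    Tendsto (fun n => (P ^ n) r k) atTop (𝓝 (π k)) := by
  set g : ι × ι → ℝ := fun x => ∑ l ∈ S, min ((P ^ N) x.1 l) ((P ^ N) x.2 l)
  have hSS : (S ×ˢ S).Nonempty := ⟨(r, r), mem_product.2 ⟨hr, hr⟩⟩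
  set δ := min 1 ((S ×ˢ S).inf' hSS g)
  have hδpos : 0 < δ := lt_min one_pos <| (lt_inf'_iff _).2 fun x hx =>
    hmin x.1 (mem_product.1 hx).1 x.2 (mem_product.1 hx).2
  have hδ : ∀ i ∈ S, ∀ j ∈ S, δ ≤ g (i, j) := fun i hi j hj =>
    (min_le_right _ _).trans (inf'_le g (mem_product.2 ⟨hi, hj⟩))
  obtain ⟨K, hK⟩ :=
    ((range N ×ˢ S ×ˢ S).image fun x => (P ^ x.1) x.2.1 k - (P ^ x.1) x.2.2 k).bddAbove
  have hspread := pow_apply_sub_pow_apply_le hS hP hN hδ (K := K) fun n hn i hi j hj =>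
    hK <| mem_coe.2 <| mem_image.2 ⟨(n, i, j), by simp [hn, hi, hj], rfl⟩
  have hbound : ∀ n, |(P ^ n) r k - π k| ≤ (∑ s ∈ S, |π s|) * ((1 - δ) ^ (n / N) * K) := by
    intro n
    -- `π` is stationary with mass one, so `π k` is a `π`-average of the column `(P ^ n) · k`
    have : (P ^ n) r k - π k = ∑ s ∈ S, π s * ((P ^ n) r k - (P ^ n) s k) := by
      simp only [mul_sub, sum_sub_distrib, ← sum_mul, hπsum, one_mul,
        sum_mul_pow_apply_of_closed hS hπ n hk]
    rw [this, sum_mul]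
    refine (abs_sum_le_sum_abs _ _).trans (sum_le_sum fun s hs => ?_)
    rw [abs_mul]
    exact mul_le_mul_of_nonneg_left (abs_sub_le_iff.2
      ⟨hspread n r hr s hs, hspread n s hs r hr⟩) (abs_nonneg _)
  have hgeom : Tendsto (fun n => (1 - δ) ^ (n / N)) atTop (𝓝 0) :=
    (tendsto_pow_atTop_nhds_zero_of_lt_one (by linarith [min_le_left 1 ((S ×ˢ S).inf' hSS g)])
      (by linarith)).comp (Nat.tendsto_div_const_atTop hN.ne')
  have hlim : Tendsto (fun n => (∑ s ∈ S, |π s|) * ((1 - δ) ^ (n / N) * K)) atTop (𝓝 0) := by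
    simpa using (hgeom.mul_const K).const_mul (∑ s ∈ S, |π s|)
  exact tendsto_iff_norm_sub_tendsto_zero.2 (squeeze_zero (fun _ => norm_nonneg _) hbound hlim)

end ClosedClass

theorem perturbed_pow_eq {P : Matrix ι ι ℝ} (hP : P *ᵥ 1 = 1) {d : ι → ℝ} (hd : ∑ i, d i = 1)
    (ε : ℝ) (n : ℕ) :
    ((1 - ε) • P + ε • vecMulVec 1 d) ^ n
      = (1 - ε) ^ n • P ^ n + ∑ l ∈ range n, (ε * (1 - ε) ^ l) • (vecMulVec 1 d * P ^ l) := by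
  set Pε := (1 - ε) • P + ε • vecMulVec 1 d
  have hPε : Pε *ᵥ 1 = 1 := by
    rw [add_mulVec, smul_mulVec, smul_mulVec, hP, vecMulVec_mulVec, dotProduct_one, hd]
    ext i
    simp only [Pi.add_apply, Pi.smul_apply, MulOpposite.op_one, one_smul, smul_eq_mul]
    ring
  induction n with
  | zero => simp
  | succ n ih =>
    calc Pε ^ (n + 1) = (1 - ε) • (Pε ^ n * P) + ε • (Pε ^ n * vecMulVec 1 d) := by
          rw [pow_succ, Matrix.mul_add, Matrix.mul_smul, Matrix.mul_smul]
      _ = _ := by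
          rw [mul_vecMulVec, pow_mulVec_eq_self hPε, ih, Matrix.add_mul, Matrix.sum_mul,
            sum_range_succ', smul_add, Finset.smul_sum]
          simp only [Matrix.smul_mul, Matrix.mul_assoc, ← pow_succ, smul_smul, pow_zero,
            Matrix.mul_one]
          have hc : ∀ l : ℕ, (1 - ε) * (ε * (1 - ε) ^ l) = ε * (1 - ε) ^ (l + 1) := fun l => by
            ring
          simp only [hc]
          module

theorem vecMul_perturbed_pow {P : Matrix ι ι ℝ} (hP : P *ᵥ 1 = 1) {d : ι → ℝ}
    (hd : ∑ i, d i = 1) {p : ι → ℝ} (hp : ∑ i, p i = 1) (ε : ℝ) (n : ℕ) :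
    p ᵥ* ((1 - ε) • P + ε • vecMulVec 1 d) ^ n
      = (1 - ε) ^ n • (p ᵥ* P ^ n) + ∑ l ∈ range n, (ε * (1 - ε) ^ l) • (d ᵥ* P ^ l) := by
  have hpd : p ᵥ* vecMulVec 1 d = d := by
    rw [vecMul_vecMulVec]; simp [dotProduct, hp]
  simp only [perturbed_pow_eq hP hd, vecMul_add, vecMul_smul, vecMul_sum, ← vecMul_vecMul, hpd]

end Matrix

theorem tendsto_sum_range_mul_of_tendsto_zero {α : Type*} {F : Filter α} {w : α → ℕ → ℝ}
    {n : α → ℕ} {e : ℕ → ℝ} (he : Tendsto e atTop (𝓝 0)) (hw0 : ∀ᶠ x in F, ∀ l, 0 ≤ w x l)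
    (hw1 : ∀ᶠ x in F, ∑ l ∈ range (n x), w x l ≤ 1) (hw : ∀ l, Tendsto (fun x => w x l) F (𝓝 0)) :
    Tendsto (fun x => ∑ l ∈ range (n x), w x l * e l) F (𝓝 0) := by
  obtain ⟨M, hM⟩ := isBounded_iff_forall_norm_le.1 (Metric.isBounded_range_of_tendsto e he)
  rw [Metric.tendsto_nhds]
  intro η hη
  obtain ⟨L, hL⟩ := eventually_atTop.1 (he.eventually (Metric.closedBall_mem_nhds 0 (half_pos hη)))
  have hhead : Tendsto (fun x => (∑ l ∈ range L, w x l) * M) F (𝓝 0) := by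
    simpa using (tendsto_finsetSum _ fun l _ => hw l).mul_const M
  filter_upwards [hw0, hw1, hhead.eventually (gt_mem_nhds (half_pos hη))] with x h0 h1 hsmall
  rw [Real.dist_eq, sub_zero, ← sum_filter_add_sum_filter_not _ (· < L)]
  have hfirst : |∑ l ∈ (range (n x)).filter (· < L), w x l * e l| ≤ (∑ l ∈ range L, w x l) * M := by
    calc _ ≤ ∑ l ∈ (range (n x)).filter (· < L), |w x l * e l| := abs_sum_le_sum_abs _ _
      _ ≤ ∑ l ∈ range L, |w x l * e l| :=
          sum_le_sum_of_subset_of_nonneg (fun l hl => by simp_all) fun _ _ _ => abs_nonneg _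
      _ ≤ (∑ l ∈ range L, w x l) * M := by
          rw [sum_mul]
          refine sum_le_sum fun l _ => ?_
          rw [abs_mul, abs_of_nonneg (h0 l)]
          exact mul_le_mul_of_nonneg_left (hM _ ⟨l, rfl⟩) (h0 l)
  have hsecond : |∑ l ∈ (range (n x)).filter (¬ · < L), w x l * e l| ≤ η / 2 := by
    calc _ ≤ ∑ l ∈ (range (n x)).filter (¬ · < L), |w x l * e l| := abs_sum_le_sum_abs _ _
      _ ≤ ∑ l ∈ (range (n x)).filter (¬ · < L), w x l * (η / 2) := sum_le_sum fun l hl => by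
          rw [abs_mul, abs_of_nonneg (h0 l)]
          refine mul_le_mul_of_nonneg_left ?_ (h0 l)
          simpa using hL l (not_lt.1 (mem_filter.1 hl).2)
      _ ≤ ∑ l ∈ range (n x), w x l * (η / 2) :=
          sum_le_sum_of_subset_of_nonneg (filter_subset _ _) fun l _ _ =>
            mul_nonneg (h0 l) (half_pos hη).le
      _ ≤ η / 2 := by
          rw [← sum_mul]
          exact mul_le_of_le_one_left (half_pos hη).le h1
  calc _ ≤ _ := abs_add_le _ _
    _ < η := by linarith

theorem tendsto_one_sub_pow_of_mul_tendsto {n : ℝ → ℕ} {t : ℝ}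
    (hnt : Tendsto (fun ε => ε * (n ε : ℝ)) (𝓝[>] 0) (𝓝 t)) :
    Tendsto (fun ε => (1 - ε) ^ n ε) (𝓝[>] 0) (𝓝 (Real.exp (-t))) := by
  have hlog : HasDerivAt (fun x => Real.log (1 - x)) (-1) 0 := by
    simpa using ((hasDerivAt_id (0 : ℝ)).const_sub 1).log (by norm_num)
  have hslope : Tendsto (fun ε => ε⁻¹ * Real.log (1 - ε)) (𝓝[>] 0) (𝓝 (-1)) := by
    simpa using hlog.tendsto_slope_zero_right
  have hexponent : Tendsto (fun ε => n ε * Real.log (1 - ε)) (𝓝[>] 0) (𝓝 (-t)) := by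
    have := hnt.mul hslope
    rw [mul_neg_one] at this
    refine this.congr' ?_
    filter_upwards [self_mem_nhdsWithin] with ε (hε : 0 < ε)
    field_simp
  refine ((Real.continuous_exp.tendsto _).comp hexponent).congr' ?_
  filter_upwards [Ioo_mem_nhdsGT one_pos] with ε hε
  rw [Function.comp_apply, Real.exp_nat_mul, Real.exp_log (by linarith [hε.2])]

theorem tendsto_renewal_sum {n : ℝ → ℕ} (hn : Tendsto n (𝓝[>] 0) atTop) {t : ℝ}
    (hnt : Tendsto (fun ε => ε * (n ε : ℝ)) (𝓝[>] 0) (𝓝 t)) {A B : ℕ → ℝ} {a b : ℝ}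
    (hA : Tendsto A atTop (𝓝 a)) (hB : Tendsto B atTop (𝓝 b)) :
    Tendsto (fun ε => (1 - ε) ^ n ε * B (n ε) + ∑ l ∈ range (n ε), ε * (1 - ε) ^ l * A l)
      (𝓝[>] 0) (𝓝 (b * Real.exp (-t) + a * (1 - Real.exp (-t)))) := by
  have hpow := tendsto_one_sub_pow_of_mul_tendsto hnt
  have hmass : ∀ ε : ℝ, ∑ l ∈ range (n ε), ε * (1 - ε) ^ l = 1 - (1 - ε) ^ n ε := fun ε => by
    rw [← mul_sum, ← geom_sum_mul_neg, sub_sub_cancel, mul_comm]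
  have hunit : ∀ᶠ ε in 𝓝[>] (0 : ℝ), ε ∈ Set.Ioo 0 1 := Ioo_mem_nhdsGT one_pos
  have herr : Tendsto (fun ε => ∑ l ∈ range (n ε), ε * (1 - ε) ^ l * (A l - a)) (𝓝[>] 0) (𝓝 0) := by
    refine tendsto_sum_range_mul_of_tendsto_zero (by simpa using hA.sub_const a) ?_ ?_ fun l => ?_
    · filter_upwards [hunit] with ε hε l
      exact mul_nonneg hε.1.le (pow_nonneg (by linarith [hε.2]) l)
    · filter_upwards [hunit] with ε hε
      rw [hmass]
      linarith [pow_nonneg (by linarith [hε.2] : 0 ≤ 1 - ε) (n ε)]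
    · exact ((continuous_id.mul ((continuous_const.sub continuous_id).pow l)).tendsto' 0 0
        (by simp)).mono_left nhdsWithin_le_nhds
  have hlim := ((hpow.mul (hB.comp hn)).add
    ((tendsto_const_nhds (x := (1 : ℝ)).sub hpow).const_mul a)).add herr
  rw [add_zero, mul_comm (Real.exp (-t))] at hlim
  refine hlim.congr fun ε => ?_
  simp only [Function.comp_apply, mul_sub, sum_sub_distrib, ← sum_mul, hmass]
  ring

theorem stmt19_general {m h : ℕ}
    (P₀ D : Matrix (Fin m) (Fin m) ℝ)
    (hP₀row : ∀ i, ∑ j, P₀ i j = 1)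
    (d : Fin m → ℝ) (hdsum : ∑ i, d i = 1)
    (hD : ∀ i j, D i j = d j)
    (C : Fin h → Finset (Fin m))
    (hCdisj : ∀ j j', j ≠ j' → Disjoint (C j) (C j'))
    (hCcover : ∀ i, ∃ j, i ∈ C j)
    (hCclosed : ∀ j, ∀ i ∈ C j, ∀ k, k ∉ C j → P₀ i k = 0)
    (hΔ : ∀ j, ∃ N : ℕ, 1 ≤ N ∧ ∀ r ∈ C j, ∀ k ∈ C j,
      0 < ∑ i ∈ C j, min ((P₀ ^ N) r i) ((P₀ ^ N) k i))
    (π₀ : Fin h → Fin m → ℝ)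
    (hπ₀sum : ∀ j, ∑ k ∈ C j, π₀ j k = 1)
    (hπ₀stat : ∀ j, ∀ k ∈ C j, ∑ r ∈ C j, π₀ j r * P₀ r k = π₀ j k)
    (p : Fin m → ℝ) (hpsum : ∑ i, p i = 1)
    (n : ℝ → ℕ) (hn : Tendsto n (nhdsWithin 0 (Set.Ioi 0)) atTop)
    (t : ℝ)
    (hnt : Tendsto (fun ε : ℝ => ε * (n ε : ℝ)) (nhdsWithin 0 (Set.Ioi 0)) (nhds t))
    (j : Fin h) (k : Fin m) (hk : k ∈ C j) :
    Tendsto (fun ε : ℝ => ∑ i, p i * (((1 - ε) • P₀ + ε • D) ^ (n ε)) i k)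
      (nhdsWithin 0 (Set.Ioi 0))
      (nhds ((∑ i ∈ C j, p i) * π₀ j k * Real.exp (-t)
        + (∑ i ∈ C j, d i) * π₀ j k * (1 - Real.exp (-t)))) := by
  have hP : P₀ *ᵥ 1 = 1 := funext fun i => by simp [mulVec, dotProduct, hP₀row]
  have hD' : D = vecMulVec 1 d := by ext i i'; rw [hD, vecMulVec_apply, Pi.one_apply, one_mul]
  obtain ⟨N, hN, hmin⟩ := hΔ j
  have hoff : ∀ l, ∀ i ∉ C j, (P₀ ^ l) i k = 0 := fun l i hi => by
    obtain ⟨j', hij'⟩ := hCcover i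
    have hjj' : j' ≠ j := by rintro rfl; exact hi hij'
    exact pow_apply_eq_zero_of_closed (hCclosed j') l hij' (disjoint_right.1 (hCdisj j' j hjj') hk)
  have hcol : ∀ q : Fin m → ℝ,
      Tendsto (fun l => (q ᵥ* P₀ ^ l) k) atTop (𝓝 ((∑ i ∈ C j, q i) * π₀ j k)) := fun q => by
    have hrestrict : ∀ l, (q ᵥ* P₀ ^ l) k = ∑ i ∈ C j, q i * (P₀ ^ l) i k := fun l =>
      (sum_subset (subset_univ (C j)) fun i _ hi => by simp [hoff l i hi]).symm
    simp only [hrestrict, sum_mul]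
    exact tendsto_finsetSum _ fun i hi => (tendsto_pow_apply_of_closed (hCclosed j) hP hN hmin
      (hπ₀sum j) (hπ₀stat j) hk hi).const_mul (q i)
  have hlim := tendsto_renewal_sum hn hnt (hcol d) (hcol p)
  refine hlim.congr fun ε => ?_
  change _ = (p ᵥ* _) k
  rw [hD', vecMul_perturbed_pow hP hdsum hpsum]
  simp [Finset.sum_apply]

/-- triangular-array ergodic theorem in the singular case. The phase space
splits into `h` disjoint nonempty closed classes `C j`, each exponentially ergodic for `P₀`
(for some `N ≥ 1` the class-wise ergodicity coefficient satisfies `Δ^{(j)}_N(P₀) < 1`,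
i.e. `Q^{(j)}_N(P₀) = min_{r,k ∈ C j} ∑_{i ∈ C j} min((P₀^N)_{ri}, (P₀^N)_{ki}) > 0`),
with class stationary distribution `π₀^{(j)}`. With `P_ε = (1-ε) P₀ + ε D`, `D` having
identical rows equal to the positive probability vector `d`: if `n_ε → ∞` and
`ε n_ε → t ∈ (0,∞)` as `ε → 0+`, then for `k ∈ C j`,
`p_{ε,p̄,k}(n_ε) → π_{0,p̄,k} e^{-t} + π_{0,d̄,k} (1 - e^{-t})` as `ε → 0+`,
where `π_{0,p̄,k} = f^{(j)}_p π₀^{(j)}_k`, `π_{0,d̄,k} = f^{(j)}_d π₀^{(j)}_k`. -/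
theorem stmt19 {m h : ℕ}
    (P₀ D : Matrix (Fin m) (Fin m) ℝ)
    (hP₀nonneg : ∀ i j, 0 ≤ P₀ i j) (hP₀row : ∀ i, ∑ j, P₀ i j = 1)
    (d : Fin m → ℝ) (hd : ∀ i, 0 < d i) (hdsum : ∑ i, d i = 1)
    (hD : ∀ i j, D i j = d j)
    (C : Fin h → Finset (Fin m))
    (hCne : ∀ j, (C j).Nonempty)
    (hCdisj : ∀ j j', j ≠ j' → Disjoint (C j) (C j'))
    (hCcover : ∀ i, ∃ j, i ∈ C j)
    (hCclosed : ∀ j, ∀ i ∈ C j, ∀ k, k ∉ C j → P₀ i k = 0)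
    (hΔ : ∀ j, ∃ N : ℕ, 1 ≤ N ∧ ∀ r ∈ C j, ∀ k ∈ C j,
      0 < ∑ i ∈ C j, min ((P₀ ^ N) r i) ((P₀ ^ N) k i))
    (π₀ : Fin h → Fin m → ℝ)
    (hπ₀nonneg : ∀ j k, 0 ≤ π₀ j k)
    (hπ₀sum : ∀ j, ∑ k ∈ C j, π₀ j k = 1)
    (hπ₀stat : ∀ j, ∀ k ∈ C j, ∑ r ∈ C j, π₀ j r * P₀ r k = π₀ j k)
    (p : Fin m → ℝ) (hpnonneg : ∀ i, 0 ≤ p i) (hpsum : ∑ i, p i = 1)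
    (n : ℝ → ℕ) (hn : Tendsto n (nhdsWithin 0 (Set.Ioi 0)) atTop)
    (t : ℝ) (ht : 0 < t)
    (hnt : Tendsto (fun ε : ℝ => ε * (n ε : ℝ)) (nhdsWithin 0 (Set.Ioi 0)) (nhds t))
    (j : Fin h) (k : Fin m) (hk : k ∈ C j) :
    Tendsto (fun ε : ℝ => ∑ i, p i * (((1 - ε) • P₀ + ε • D) ^ (n ε)) i k)
      (nhdsWithin 0 (Set.Ioi 0))
      (nhds ((∑ i ∈ C j, p i) * π₀ j k * Real.exp (-t)
        + (∑ i ∈ C j, d i) * π₀ j k * (1 - Real.exp (-t)))) :=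
  stmt19_general P₀ D hP₀row d hdsum hD C hCdisj hCcover hCclosed hΔ π₀ hπ₀sum hπ₀stat p hpsum n hn
    t hnt j k hk
end
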